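/- arXiv:2108.09414 — 4 statements merged into one kernel-verified Lean document; each statement's English description precedes it below -/
import Mathlib

section
/- For all integers n ≥ 2 and j ≥ 0, the number of partitions λ of n with crank(λ) ≥ j equals the number of triples (d, α, β) where d ≥ 0 is an integer, α is a partition with at most d parts, β is a partition with at most d + j parts, and (d+1)(d+j) + |α| + |β| = n (here |α| denotes the sum of the parts of α, and the empty partition is allowed). -/
set_option maxHeartbeats 1000000

/-- Number of parts equal to 1 in a partition. -/
def partOmega {n : ℕ} (P : Nat.Partition n) : ℕ := P.parts.count 1

/-- Number of parts strictly greater than `partOmega P`. -/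
def partMu {n : ℕ} (P : Nat.Partition n) : ℕ :=
  (P.parts.filter (fun x => partOmega P < x)).card

/-- The crank of a partition: the largest part if there are no parts equal to 1,
and `μ(λ) - ω(λ)` otherwise. -/
def crank {n : ℕ} (P : Nat.Partition n) : ℤ :=
  if partOmega P = 0 then (P.parts.sup : ℤ)
  else (partMu P : ℤ) - (partOmega P : ℤ)

namespace CrankPf
open Multiset


/-- number of parts of `M` that are `≥ c`. -/
def cnt (M : Multiset ℕ) (c : ℕ) : ℕ := countP (fun x => c ≤ x) M

/-- conjugate partition -/
def conj (M : Multiset ℕ) : Multiset ℕ := (Multiset.range M.sup).map (fun i => cnt M (i+1))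

lemma cnt_le_card (M : Multiset ℕ) (c : ℕ) : cnt M c ≤ card M := countP_le_card _ _

lemma cnt_mono (M : Multiset ℕ) {c c' : ℕ} (h : c ≤ c') : cnt M c' ≤ cnt M c := by
  simp only [cnt, countP_eq_card_filter]
  exact card_le_card (monotone_filter_right M (fun b hb => le_trans h hb))

lemma cnt_add (M N : Multiset ℕ) (c : ℕ) : cnt (M + N) c = cnt M c + cnt N c :=
  countP_add _ _ _

lemma cnt_replicate (k a c : ℕ) : cnt (replicate k a) c = if c ≤ a then k else 0 := by
  induction k with
  | zero => simp [cnt]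
  | succ k ih =>
    rw [replicate_succ]
    simp only [cnt, countP_cons] at *
    rw [ih]
    split <;> simp

lemma cnt_map_add (M : Multiset ℕ) (k c : ℕ) :
    cnt (M.map (fun x => x + k)) (c + k) = cnt M c := by
  unfold cnt
  rw [countP_map, countP_eq_card_filter]
  congr 1
  apply filter_congr
  intro x _
  omega

lemma cnt_eq_zero (M : Multiset ℕ) {c : ℕ} (h : ∀ x ∈ M, x < c) : cnt M c = 0 := by
  simp only [cnt, countP_eq_zero]
  intro x hx
  exact not_le.2 (h x hx)

lemma cnt_pos_iff (M : Multiset ℕ) {c : ℕ} : 0 < cnt M c ↔ ∃ x ∈ M, c ≤ x := by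
  simp [cnt, countP_pos]

lemma cnt_one (M : Multiset ℕ) (h : ∀ x ∈ M, 0 < x) : cnt M 1 = card M := by
  simp only [cnt]
  rw [countP_eq_card]
  intro x hx; exact h x hx

lemma cnt_succ (M : Multiset ℕ) (c : ℕ) : cnt M c = cnt M (c + 1) + count c M := by
  simp only [cnt]
  induction M using Multiset.induction_on with
  | empty => simp
  | cons a M ih =>
    simp only [countP_cons, count_cons]
    split_ifs <;> omega

lemma cnt_zero_right (M : Multiset ℕ) : cnt M 0 = card M := by
  simp [cnt, countP_eq_card]

lemma cnt_sup_lt (M : Multiset ℕ) {c : ℕ} (h : M.sup < c) : cnt M c = 0 :=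
  cnt_eq_zero M (fun x hx => lt_of_le_of_lt (le_sup hx) h)

/-- extensionality by `cnt` for positive multisets -/
lemma eq_of_cnt_eq {A B : Multiset ℕ} (hA : ∀ x ∈ A, 0 < x) (hB : ∀ x ∈ B, 0 < x)
    (h : ∀ c, cnt A c = cnt B c) : A = B := by
  ext x
  rcases Nat.eq_zero_or_pos x with rfl | hx
  · rw [count_eq_zero.2 (fun hmem => lt_irrefl 0 (hA 0 hmem)),
        count_eq_zero.2 (fun hmem => lt_irrefl 0 (hB 0 hmem))]
  · have h1 := cnt_succ A x
    have h2 := cnt_succ B x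
    have := h x; have := h (x+1)
    omega

lemma conj_pos (M : Multiset ℕ) : ∀ x ∈ conj M, 0 < x := by
  intro x hx
  simp only [conj, mem_map, Multiset.mem_range] at hx
  obtain ⟨i, hi, rfl⟩ := hx
  rw [cnt_pos_iff]
  by_contra hc
  push_neg at hc
  have : M.sup ≤ i := sup_le.2 (fun b hb => by have := hc b hb; omega)
  omega

lemma card_conj (M : Multiset ℕ) : card (conj M) = M.sup := by
  simp [conj]

lemma mem_conj_le_card (M : Multiset ℕ) : ∀ x ∈ conj M, x ≤ card M := by
  intro x hx
  simp only [conj, mem_map, Multiset.mem_range] at hx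
  obtain ⟨i, hi, rfl⟩ := hx
  exact cnt_le_card M _

/-- the key Galois-type characterization of the conjugate -/
lemma lt_cnt_conj_iff {M : Multiset ℕ} {c i : ℕ} (hc : 1 ≤ c) :
    i < cnt (conj M) c ↔ c ≤ cnt M (i + 1) := by
  have hrepr : cnt (conj M) c = ((Finset.range M.sup).filter (fun i => c ≤ cnt M (i+1))).card := by
    simp only [conj, cnt, countP_map]
    rfl
  constructor
  · intro h
    by_contra hcon
    push_neg at hcon
    have hsub : (Finset.range M.sup).filter (fun j => c ≤ cnt M (j+1)) ⊆ Finset.range i := by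
      intro j hj
      simp only [Finset.mem_filter, Finset.mem_range] at *
      by_contra hji
      push_neg at hji
      have : cnt M (j+1) ≤ cnt M (i+1) := cnt_mono M (by omega)
      omega
    have := Finset.card_le_card hsub
    simp only [Finset.card_range] at this
    omega
  · intro h
    have hisup : i < M.sup := by
      have : 0 < cnt M (i+1) := by omega
      rw [cnt_pos_iff] at this
      obtain ⟨x, hx, hxi⟩ := this
      exact lt_of_lt_of_le hxi (le_sup hx)
    have hsub : Finset.range (i+1) ⊆ (Finset.range M.sup).filter (fun j => c ≤ cnt M (j+1)) := by
      intro j hj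
      simp only [Finset.mem_range] at hj
      simp only [Finset.mem_filter, Finset.mem_range]
      exact ⟨by omega, le_trans h (cnt_mono M (by omega))⟩
    have := Finset.card_le_card hsub
    simp only [Finset.card_range] at this
    omega

lemma cnt_conj_le_iff {M : Multiset ℕ} {c i : ℕ} (hc : 1 ≤ c) :
    cnt (conj M) c ≤ i ↔ cnt M (i + 1) < c := by
  have h := lt_cnt_conj_iff (M := M) (c := c) (i := i) hc
  constructor
  · intro h1
    by_contra h2
    have := h.mpr (by omega)
    omega
  · intro h1
    by_contra h2
    have := h.mp (by omega)
    omega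

lemma cnt_conj_conj (M : Multiset ℕ) {c : ℕ} (hc : 1 ≤ c) :
    cnt (conj (conj M)) c = cnt M c := by
  have key : ∀ i, i < cnt (conj (conj M)) c ↔ i < cnt M c := by
    intro i
    rw [lt_cnt_conj_iff hc]
    rcases Nat.eq_zero_or_pos c with rfl | hcp
    · omega
    · have : c - 1 < cnt (conj M) (i+1) ↔ i + 1 ≤ cnt M (c - 1 + 1) := lt_cnt_conj_iff (by omega)
      have hc1 : c - 1 + 1 = c := by omega
      rw [hc1] at this
      omega
  have h1 := key (cnt M c)
  have h2 := key (cnt (conj (conj M)) c)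
  omega

lemma sup_conj {M : Multiset ℕ} (hM : ∀ x ∈ M, 0 < x) : (conj M).sup = card M := by
  apply le_antisymm
  · exact sup_le.2 (mem_conj_le_card M)
  · by_cases hM0 : M = 0
    · simp [hM0]
    · obtain ⟨x, hx⟩ := exists_mem_of_ne_zero hM0
      have hsup : 1 ≤ M.sup := le_trans (hM x hx) (le_sup hx)
      have hmem : cnt M 1 ∈ conj M := by
        simp only [conj, mem_map, Multiset.mem_range]
        exact ⟨0, by omega, rfl⟩
      rw [← cnt_one M hM]
      exact le_sup hmem

lemma conj_conj {M : Multiset ℕ} (hM : ∀ x ∈ M, 0 < x) : conj (conj M) = M := by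
  apply eq_of_cnt_eq (conj_pos _) hM
  intro c
  rcases Nat.eq_zero_or_pos c with rfl | hc
  · rw [cnt_zero_right, cnt_zero_right, card_conj, sup_conj hM]
  · exact cnt_conj_conj M hc


lemma sum_range_cnt (M : Multiset ℕ) {K : ℕ} (hK : ∀ x ∈ M, x ≤ K) :
    ∑ i ∈ Finset.range K, cnt M (i + 1) = M.sum := by
  induction M using Multiset.induction_on with
  | empty => simp [cnt]
  | cons a M ih =>
    have ha : a ≤ K := hK a (mem_cons_self a M)
    have hM : ∀ x ∈ M, x ≤ K := fun x hx => hK x (mem_cons_of_mem hx)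
    have hcons : ∀ i : ℕ, cnt (a ::ₘ M) (i+1) = cnt M (i+1) + if i+1 ≤ a then 1 else 0 := by
      intro i
      simp [cnt, countP_cons]
    simp only [hcons, Finset.sum_add_distrib, ih hM, sum_cons]
    have : ∑ i ∈ Finset.range K, (if i+1 ≤ a then 1 else 0) = a := by
      rw [Finset.sum_boole]
      have : (Finset.range K).filter (fun i => i+1 ≤ a) = Finset.range a := by
        ext i
        simp only [Finset.mem_filter, Finset.mem_range]
        omega
      rw [this, Finset.card_range]
      simp
    omega

lemma conj_sum (M : Multiset ℕ) : (conj M).sum = M.sum := by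
  have : (conj M).sum = ∑ i ∈ Finset.range M.sup, cnt M (i + 1) := rfl
  rw [this, sum_range_cnt M (fun x hx => le_sup hx)]

/-- decomposition of a positive multiset into its ones and the rest -/
lemma ones_decomp {M : Multiset ℕ} (hM : ∀ x ∈ M, 0 < x) :
    replicate (count 1 M) 1 + M.filter (fun x => 2 ≤ x) = M := by
  have h1 : M.filter (· = 1) = replicate (count 1 M) 1 := filter_eq' M 1
  rw [← h1]
  have : ∀ x ∈ M, (x = 1) ↔ ¬ (2 ≤ x) := by
    intro x hx
    have := hM x hx
    omega
  calc M.filter (· = 1) + M.filter (fun x => 2 ≤ x)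
      = M.filter (fun x => ¬ 2 ≤ x) + M.filter (fun x => 2 ≤ x) := by
        rw [filter_congr (fun x hx => by rw [show ((x = 1) = ¬(2 ≤ x)) from eq_iff_iff.2 (this x hx)])]
    _ = M := by rw [add_comm, filter_add_not]

/-- if a positive multiset has no ones then cnt at 2 = cnt at 1 -/
lemma cnt_two_of_no_ones {M : Multiset ℕ} (h1 : count 1 M = 0) :
    cnt M 2 = cnt M 1 := by
  have h := cnt_succ M 1
  norm_num at h
  omega

/-- `count 1 (conj M) = 0` iff no cnt-value equals 1 -/
lemma count_one_conj_eq_zero {M : Multiset ℕ} (h : ∀ c, cnt M (c + 1) ≠ 1) :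
    count 1 (conj M) = 0 := by
  have h2 := cnt_succ (conj M) 1
  norm_num at h2
  -- count 1 (conj M) = cnt (conj M) 1 - cnt (conj M) 2
  have hle : cnt (conj M) 1 ≤ cnt (conj M) 2 := by
    by_contra hc
    push_neg at hc
    -- cnt (conj M) 2 < cnt (conj M) 1 : take i := cnt (conj M) 2 : i < cnt _ 1 so 1 ≤ cnt M (i+1);
    -- and ¬ (i < cnt _ 2) so cnt M (i+1) < 2, contradiction with h
    set i := cnt (conj M) 2 with hi
    have ha : 1 ≤ cnt M (i+1) := (lt_cnt_conj_iff (by omega)).1 hc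
    have hb : cnt M (i+1) < 2 := by
      have h3 := cnt_conj_le_iff (M := M) (c := 2) (i := i) (by omega)
      norm_num at h3
      exact Nat.lt_succ_of_le (h3.1 (by omega))
    exact h i (by omega)
  omega

/-- reverse: if conj M has no ones, no cnt value of M equals 1 -/
lemma cnt_ne_one_of_count_one_conj {M : Multiset ℕ} (h : count 1 (conj M) = 0) :
    ∀ c, cnt M (c + 1) ≠ 1 := by
  intro c hc
  have h2 := cnt_succ (conj M) 1
  norm_num at h2
  have ha : c < cnt (conj M) 1 := (lt_cnt_conj_iff (le_refl 1)).2 (by omega)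
  have hb : cnt (conj M) 2 ≤ c := by
    have h3 := cnt_conj_le_iff (M := M) (c := 2) (i := c) (by omega)
    norm_num at h3
    exact h3.2 (by omega)
  omega

/-- no ones in M implies no cnt-value of conj M equals 1 -/
lemma cnt_conj_ne_one {M : Multiset ℕ} (h1 : count 1 M = 0) :
    ∀ c, cnt (conj M) (c + 1) ≠ 1 := by
  intro c hc
  have ha : c + 1 ≤ cnt M 1 := (lt_cnt_conj_iff (by omega)).1 (by omega)
  have hb : cnt M 2 < c + 1 := by
    have h3 := cnt_conj_le_iff (M := M) (c := c + 1) (i := 1) (by omega)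
    norm_num at h3
    exact Nat.lt_succ_of_le (h3.1 (by omega))
  have := cnt_two_of_no_ones h1
  omega


lemma durf_unique {j d d' : ℕ} {ρ : Multiset ℕ}
    (H1 : d + j ≤ cnt ρ (d+1)) (H2 : cnt ρ (d+2) ≤ d + j)
    (H1' : d' + j ≤ cnt ρ (d'+1)) (H2' : cnt ρ (d'+2) ≤ d' + j) : d = d' := by
  rcases lt_trichotomy d d' with h | h | h
  · have := cnt_mono ρ (show d + 2 ≤ d' + 1 by omega)
    omega
  · exact h
  · have := cnt_mono ρ (show d' + 2 ≤ d + 1 by omega)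
    omega

def durf (j : ℕ) (ρ : Multiset ℕ) : ℕ :=
  Nat.findGreatest (fun e => e + j ≤ cnt ρ (e+1)) (card ρ + j + 1)

lemma durf_spec {j c : ℕ} {ρ : Multiset ℕ} (hc : c + j ≤ cnt ρ (c+1)) :
    durf j ρ + j ≤ cnt ρ (durf j ρ + 1) ∧ cnt ρ (durf j ρ + 2) ≤ durf j ρ + j := by
  have hcB : c ≤ card ρ + j + 1 := by
    have := cnt_le_card ρ (c+1)
    omega
  have hPd : durf j ρ + j ≤ cnt ρ (durf j ρ + 1) :=
    Nat.findGreatest_spec (P := fun e => e + j ≤ cnt ρ (e+1)) hcB hc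
  refine ⟨hPd, ?_⟩
  have h1 : durf j ρ ≤ card ρ + j + 1 := Nat.findGreatest_le _
  have hdB : durf j ρ < card ρ + j + 1 := by
    rcases Nat.lt_or_ge (durf j ρ) (card ρ + j + 1) with h | h
    · exact h
    · exfalso
      have := cnt_le_card ρ (durf j ρ + 1)
      omega
  have h2 := Nat.findGreatest_is_greatest (P := fun e => e + j ≤ cnt ρ (e+1))
    (k := durf j ρ + 1) (Nat.lt_succ_self _) (by omega)
  simp only [not_le] at h2
  have h3 : durf j ρ + 1 + 1 = durf j ρ + 2 := rfl
  rw [h3] at h2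
  omega

lemma sum_map_addk (M : Multiset ℕ) (k : ℕ) :
    (M.map (fun x => x + k)).sum = M.sum + card M * k := by
  induction M using Multiset.induction_on with
  | empty => simp
  | cons a M ih =>
    simp only [map_cons, sum_cons, card_cons, ih]
    ring

section Rect

variable (d j : ℕ) (Tp Bt : Multiset ℕ)

/-- reconstruction of the dissected partition -/
def rect : Multiset ℕ :=
  Tp.map (fun x => x + (d+1)) + replicate ((d+j) - card Tp) (d+1) + Bt

variable {d j Tp Bt}

lemma rect_cnt_low (hTc : card Tp ≤ d + j) {c : ℕ} (hcd : c ≤ d + 1) (hc : 1 ≤ c) :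
    cnt (rect d j Tp Bt) c = (d + j) + cnt Bt c := by
  unfold rect
  rw [cnt_add, cnt_add, cnt_replicate]
  have h1 : cnt (Tp.map (fun x => x + (d+1))) c = card Tp := by
    unfold cnt
    rw [countP_map, ← countP_eq_card_filter, countP_eq_card]
    intro x _
    omega
  rw [h1, if_pos hcd]
  omega

lemma rect_cnt_high {c : ℕ} (hc : 1 ≤ c) :
    cnt (rect d j Tp Bt) (d + 1 + c) = cnt Tp c + cnt Bt (d + 1 + c) := by
  unfold rect
  rw [cnt_add, cnt_add, cnt_replicate, if_neg (by omega)]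
  have h1 : cnt (Tp.map (fun x => x + (d+1))) (d + 1 + c) = cnt Tp c := by
    rw [show d + 1 + c = c + (d+1) by omega]
    exact cnt_map_add Tp (d+1) c
  rw [h1]
  omega

lemma rect_cnt_high' (hBt : ∀ x ∈ Bt, x ≤ d + 1) {c : ℕ} (hc : 1 ≤ c) :
    cnt (rect d j Tp Bt) (d + 1 + c) = cnt Tp c := by
  rw [rect_cnt_high hc]
  have h2 : cnt Bt (d + 1 + c) = 0 := cnt_eq_zero Bt (fun x hx => by have := hBt x hx; omega)
  omega

lemma rect_filter_top (hTp : ∀ x ∈ Tp, 0 < x) (hBt : ∀ x ∈ Bt, x ≤ d + 1) :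
    (rect d j Tp Bt).filter (fun x => d + 2 ≤ x) = Tp.map (fun x => x + (d+1)) := by
  unfold rect
  rw [filter_add, filter_add]
  have h2 : filter (fun x => d + 2 ≤ x) (replicate (d + j - card Tp) (d+1)) = 0 := by
    rw [filter_eq_nil]
    intro a ha
    rw [eq_of_mem_replicate ha]
    omega
  have h3 : filter (fun x => d + 2 ≤ x) Bt = 0 := by
    rw [filter_eq_nil]
    intro a ha
    have := hBt a ha
    omega
  have h4 : filter (fun x => d + 2 ≤ x) (Tp.map (fun x => x + (d+1))) = Tp.map (fun x => x + (d+1)) := by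
    rw [filter_eq_self]
    intro a ha
    simp only [mem_map] at ha
    obtain ⟨y, hy, rfl⟩ := ha
    have := hTp y hy
    omega
  rw [h2, h3, h4]
  simp

lemma rect_filter_bot : (rect d j Tp Bt).filter (fun x => x ≤ d) = Bt.filter (fun x => x ≤ d) := by
  unfold rect
  rw [filter_add, filter_add]
  have h1 : filter (fun x => x ≤ d) (Tp.map (fun x => x + (d+1))) = 0 := by
    rw [filter_eq_nil]
    intro a ha
    simp only [mem_map] at ha
    obtain ⟨x, _, rfl⟩ := ha
    omega
  have h2 : filter (fun x => x ≤ d) (replicate (d + j - card Tp) (d+1)) = 0 := by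
    rw [filter_eq_nil]
    intro a ha
    rw [eq_of_mem_replicate ha]
    omega
  rw [h1, h2]
  simp

lemma rect_sum (hTc : card Tp ≤ d + j) :
    (rect d j Tp Bt).sum = (d+1) * (d+j) + Tp.sum + Bt.sum := by
  unfold rect
  rw [sum_add, sum_add, sum_replicate, smul_eq_mul, sum_map_addk]
  have h1 : card Tp * (d+1) + (d + j - card Tp) * (d+1) = (d+j) * (d+1) := by
    rw [← add_mul]
    congr 1
    omega
  have h2 : (d+j) * (d+1) = (d+1) * (d+j) := mul_comm _ _
  linarith [h1, h2]

end Rect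

/-- positivity of rect given Bt positive -/
lemma rect_pos' {d j : ℕ} {Tp Bt : Multiset ℕ} (hBt : ∀ x ∈ Bt, 0 < x) :
    ∀ x ∈ rect d j Tp Bt, 0 < x := by
  intro x hx
  unfold rect at hx
  rw [mem_add, mem_add] at hx
  rcases hx with (hx | hx) | hx
  · simp only [mem_map] at hx
    obtain ⟨y, _, rfl⟩ := hx
    omega
  · rw [eq_of_mem_replicate hx]
    omega
  · exact hBt x hx

/-- every part of rect is at least 2 provided `1 ≤ d` and Bt parts at least 2 -/
lemma rect_ge_two {d j : ℕ} {Tp Bt : Multiset ℕ} (hd : 1 ≤ d) (hBt : ∀ x ∈ Bt, 2 ≤ x) :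
    ∀ x ∈ rect d j Tp Bt, 2 ≤ x := by
  intro x hx
  unfold rect at hx
  rw [mem_add, mem_add] at hx
  rcases hx with (hx | hx) | hx
  · simp only [mem_map] at hx
    obtain ⟨y, _, rfl⟩ := hx
    omega
  · rw [eq_of_mem_replicate hx]
    omega
  · exact hBt x hx

/-- count of ones in rect -/
lemma rect_count_one {d j : ℕ} {Tp Bt : Multiset ℕ} (hd : 1 ≤ d) :
    count 1 (rect d j Tp Bt) = count 1 Bt := by
  unfold rect
  rw [count_add, count_add, count_replicate, if_neg (by omega)]
  have h1 : count 1 (Tp.map (fun x => x + (d+1))) = 0 := by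
    rw [count_eq_zero]
    intro hmem
    simp only [mem_map] at hmem
    obtain ⟨y, _, h⟩ := hmem
    omega
  rw [h1]
  omega

/-- the dissection (forward direction) -/
lemma rect_split {d j : ℕ} {ρ : Multiset ℕ}
    (H1 : d + j ≤ cnt ρ (d+1)) (H2 : cnt ρ (d+2) ≤ d + j) :
    ρ = rect d j ((ρ.filter (fun x => d + 2 ≤ x)).map (fun x => x - (d+1)))
      (ρ.filter (fun x => x ≤ d) + replicate (cnt ρ (d+1) - (d+j)) (d+1)) := by
  have hcard : card ((ρ.filter (fun x => d + 2 ≤ x)).map (fun x => x - (d+1))) = cnt ρ (d+2) := by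
    rw [card_map]
    unfold cnt
    rw [countP_eq_card_filter]
  have hmapmap : ((ρ.filter (fun x => d + 2 ≤ x)).map (fun x => x - (d+1))).map (fun x => x + (d+1))
      = ρ.filter (fun x => d + 2 ≤ x) := by
    rw [map_map]
    have : ∀ x ∈ ρ.filter (fun x => d + 2 ≤ x), ((fun x => x + (d+1)) ∘ (fun x => x - (d+1))) x = id x := by
      intro x hx
      have := of_mem_filter hx
      simp only [Function.comp, id]
      omega
    rw [map_congr rfl this, map_id]
  unfold rect
  rw [hmapmap, hcard]
  have hcount : count (d+1) ρ = cnt ρ (d+1) - cnt ρ (d+2) := by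
    have h := cnt_succ ρ (d+1)
    have h0 : d + 1 + 1 = d + 2 := rfl
    rw [h0] at h
    omega
  ext x
  rw [count_add, count_add, count_add, count_filter, count_filter,
      count_replicate, count_replicate]
  by_cases hx : x = d + 1
  · subst hx
    split_ifs <;> omega
  · split_ifs <;> omega

/-- decomposition of a multiset with parts ≤ d+1 into the ≤ d part and the (d+1)-part -/
lemma bot_decomp {d : ℕ} {Bt : Multiset ℕ} (hBt : ∀ x ∈ Bt, x ≤ d + 1) :
    Bt = Bt.filter (fun x => x ≤ d) + replicate (count (d+1) Bt) (d+1) := by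
  ext x
  rw [count_add, count_filter, count_replicate]
  by_cases hx : x = d + 1
  · subst hx
    split_ifs <;> omega
  · have hz : ¬ x ≤ d → count x Bt = 0 := by
      intro hxd
      rw [count_eq_zero]
      intro hm
      have := hBt x hm
      omega
    split_ifs with h1 h2 <;> first | omega | (exact absurd h2.symm hx) | (simp [hz h1])

lemma conj_zero : conj 0 = 0 := rfl

lemma all_one_decomp {M : Multiset ℕ} (h1 : ∀ x ∈ M, 0 < x) (h2 : ∀ x ∈ M, x ≤ 1) :
    M = replicate (count 1 M) 1 := by
  ext x
  rw [count_replicate]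
  by_cases hx : x = 1
  · subst hx
    rw [if_pos rfl]
  · rw [if_neg (fun h => hx h.symm), count_eq_zero]
    intro hm
    have := h1 x hm
    have := h2 x hm
    omega

lemma count_one_filter_two (X : Multiset ℕ) : count 1 (X.filter (fun x => 2 ≤ x)) = 0 := by
  rw [count_filter]
  simp

lemma filter_two_replicate_one (k : ℕ) (X : Multiset ℕ) :
    (replicate k 1 + X).filter (fun x => 2 ≤ x) = X.filter (fun x => 2 ≤ x) := by
  rw [filter_add]
  have : (replicate k 1).filter (fun x => 2 ≤ x) = 0 := by
    rw [filter_eq_nil]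
    intro a ha
    rw [eq_of_mem_replicate ha]
    omega
  rw [this, zero_add]

lemma count_one_replicate_add (k : ℕ) (X : Multiset ℕ) :
    count 1 (replicate k 1 + X) = k + count 1 X := by
  rw [count_add, count_replicate, if_pos rfl]

/-- three-way decomposition of a positive multiset with parts ≤ d+1 -/
lemma bot3_decomp {d : ℕ} {Bt : Multiset ℕ} (hpos : ∀ x ∈ Bt, 0 < x) (hle : ∀ x ∈ Bt, x ≤ d + 1) :
    Bt = replicate (if d = 0 then 0 else count 1 Bt) 1 + replicate (count (d+1) Bt) (d+1)
      + Bt.filter (fun x => 2 ≤ x ∧ x ≤ d) := by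
  by_cases hd : d = 0
  · subst hd
    rw [if_pos rfl]
    have hf : Bt.filter (fun x => 2 ≤ x ∧ x ≤ 0) = 0 := by
      rw [filter_eq_nil]
      intro a _
      omega
    have h1 : (0:ℕ) + 1 = 1 := rfl
    rw [hf, h1, replicate_zero, zero_add, add_zero]
    exact all_one_decomp hpos (by intro x hx; have := hle x hx; omega)
  · rw [if_neg hd]
    ext x
    rw [count_add, count_add, count_replicate, count_replicate, count_filter]
    have hbig : ¬ (x ≤ d + 1) → count x Bt = 0 := by
      intro h
      exact count_eq_zero.2 (fun hm => h (hle x hm))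
    have hzero : x = 0 → count x Bt = 0 := by
      intro h
      exact count_eq_zero.2 (fun hm => by have := hpos x hm; omega)
    by_cases hx1 : x = 1
    · subst hx1
      split_ifs <;> omega
    by_cases hxd : x = d + 1
    · subst hxd
      split_ifs <;> omega
    · split_ifs <;> omega

lemma mod_helper {w v d : ℕ} (hw : w < d + 1) : (w + v * (d+1)) % (d+1) = w := by
  rw [Nat.add_mul_mod_self_right]
  exact Nat.mod_eq_of_lt hw

lemma div_helper {w v d : ℕ} (hw : w < d + 1) : (w + v * (d+1)) / (d+1) = v := by
  rw [Nat.add_mul_div_right _ _ (by omega : 0 < d + 1), Nat.div_eq_of_lt hw]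
  omega

/-- top part of the Durfee dissection at level `d` -/
def topOf (d : ℕ) (ρ : Multiset ℕ) : Multiset ℕ :=
  (ρ.filter (fun x => d + 2 ≤ x)).map (fun x => x - (d+1))

/-- bottom part of the Durfee dissection -/
def botOf (d j : ℕ) (ρ : Multiset ℕ) : Multiset ℕ :=
  ρ.filter (fun x => x ≤ d) + replicate (cnt ρ (d+1) - (d+j)) (d+1)

lemma topOf_pos (d : ℕ) (ρ : Multiset ℕ) : ∀ x ∈ topOf d ρ, 0 < x := by
  intro x hx
  simp only [topOf, mem_map, mem_filter] at hx
  obtain ⟨y, ⟨_, hy⟩, rfl⟩ := hx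
  omega

lemma card_topOf (d : ℕ) (ρ : Multiset ℕ) : card (topOf d ρ) = cnt ρ (d+2) := by
  rw [topOf, card_map]
  unfold cnt
  rw [countP_eq_card_filter]

lemma botOf_le (d j : ℕ) (ρ : Multiset ℕ) : ∀ x ∈ botOf d j ρ, x ≤ d + 1 := by
  intro x hx
  rw [botOf, mem_add] at hx
  rcases hx with hx | hx
  · have := of_mem_filter hx
    omega
  · rw [eq_of_mem_replicate hx]

lemma botOf_pos {d j : ℕ} {ρ : Multiset ℕ} (hpos : ∀ x ∈ ρ, 0 < x) :
    ∀ x ∈ botOf d j ρ, 0 < x := by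
  intro x hx
  rw [botOf, mem_add] at hx
  rcases hx with hx | hx
  · exact hpos x (mem_of_mem_filter hx)
  · rw [eq_of_mem_replicate hx]
    omega

lemma botOf_ge_two {d j : ℕ} {ρ : Multiset ℕ} (hd : 1 ≤ d) (hpos : ∀ x ∈ ρ, 2 ≤ x) :
    ∀ x ∈ botOf d j ρ, 2 ≤ x := by
  intro x hx
  rw [botOf, mem_add] at hx
  rcases hx with hx | hx
  · exact hpos x (mem_of_mem_filter hx)
  · rw [eq_of_mem_replicate hx]
    omega

lemma rect_split' {d j : ℕ} {ρ : Multiset ℕ}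
    (H1 : d + j ≤ cnt ρ (d+1)) (H2 : cnt ρ (d+2) ≤ d + j) :
    ρ = rect d j (topOf d ρ) (botOf d j ρ) := rect_split H1 H2

/-- case A of the forward map, at level d -/
def FAd (n j d : ℕ) (ν : Multiset ℕ) : ℕ × Multiset ℕ × Multiset ℕ :=
  (d, conj (replicate (if d = 0 then 0 else count 1 (botOf d j ν)) 1
        + (botOf d j ν).filter (fun x => 2 ≤ x ∧ x ≤ d)),
      conj (replicate ((count (d+1) (botOf d j ν)) * (d+1)) 1 + conj (topOf d ν)))

/-- case B of the forward map, at level d, with w ones -/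
def FBd (n j d w : ℕ) (ρ : Multiset ℕ) : ℕ × Multiset ℕ × Multiset ℕ :=
  (d, conj (replicate (count 1 (conj (topOf d ρ))) 1 + (botOf d j ρ).filter (fun x => x ≤ d)),
      conj (replicate (w + (count (d+1) (botOf d j ρ)) * (d+1)) 1
        + (conj (topOf d ρ)).filter (fun x => 2 ≤ x)))

def Fmap (n j : ℕ) (L : Multiset ℕ) : ℕ × Multiset ℕ × Multiset ℕ :=
  if count 1 L = 0 then
    if j = 0 ∧ card L ≤ 1 then (1, conj (replicate (n-2) 1), (0 : Multiset ℕ))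
    else FAd n j (durf j (conj L)) (conj L)
  else FBd n j (durf j (L.filter (fun x => 2 ≤ x))) (count 1 L) (L.filter (fun x => 2 ≤ x))

/-- case A of the inverse map -/
def GA (j d : ℕ) (α β : Multiset ℕ) : Multiset ℕ :=
  conj (rect d j (conj ((conj β).filter (fun x => 2 ≤ x)))
        (replicate (count 1 (conj α)) 1 + replicate (count 1 (conj β) / (d+1)) (d+1)
         + (conj α).filter (fun x => 2 ≤ x)))

/-- case B of the inverse map -/
def GB (j d : ℕ) (α β : Multiset ℕ) : Multiset ℕ :=
  rect d j (conj (replicate (count 1 (conj α)) 1 + (conj β).filter (fun x => 2 ≤ x)))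
    (replicate (count 1 (conj β) / (d+1)) (d+1) + (conj α).filter (fun x => 2 ≤ x))
  + replicate (count 1 (conj β) % (d+1)) 1

def Gmap (n j : ℕ) (t : ℕ × Multiset ℕ × Multiset ℕ) : Multiset ℕ :=
  if count 1 (conj t.2.2) % (t.1 + 1) = 0 then
    if j = 0 ∧ t.1 = 1 ∧ count 1 (conj t.2.2) = 0 then {n}
    else GA j t.1 t.2.1 t.2.2
  else GB j t.1 t.2.1 t.2.2

/-- the natural-number crank condition -/
lemma Gmap_mk (n j d : ℕ) (α β : Multiset ℕ) :
    Gmap n j (d, α, β) = if count 1 (conj β) % (d + 1) = 0 then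
      (if j = 0 ∧ d = 1 ∧ count 1 (conj β) = 0 then ({n} : Multiset ℕ) else GA j d α β)
    else GB j d α β := rfl

def NCond (j : ℕ) (L : Multiset ℕ) : Prop :=
  if count 1 L = 0 then j ≤ L.sup else count 1 L + j ≤ cnt L (count 1 L + 1)

/-- the right-hand side condition -/
def RCond (n j : ℕ) (t : ℕ × Multiset ℕ × Multiset ℕ) : Prop :=
  (∀ x ∈ t.2.1, 0 < x) ∧ (∀ x ∈ t.2.2, 0 < x) ∧
    card t.2.1 ≤ t.1 ∧ card t.2.2 ≤ t.1 + j ∧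
    (t.1 + 1) * (t.1 + j) + t.2.1.sum + t.2.2.sum = n


lemma caseB_main {n j : ℕ} {L : Multiset ℕ} (hpos : ∀ x ∈ L, 0 < x) (hsum : L.sum = n)
    (hw : 1 ≤ count 1 L) (hcrank : count 1 L + j ≤ cnt L (count 1 L + 1)) :
    RCond n j (Fmap n j L) ∧ Gmap n j (Fmap n j L) = L := by
  rw [Fmap, if_neg (by omega)]
  simp only [FBd]
  set w := count 1 L with hwdef
  set ρ := L.filter (fun x => 2 ≤ x) with hrho
  set d := durf j ρ with hd
  set Tp := topOf d ρ with hTpdef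
  set Bt := botOf d j ρ with hBtdef
  set A' := conj Tp with hA'def
  set ell := count 1 A' with helldef
  set g := A'.filter (fun x => 2 ≤ x) with hgdef
  set b2 := Bt.filter (fun x => x ≤ d) with hb2def
  set v := count (d+1) Bt with hvdef
  -- basic facts
  have hρ2 : ∀ x ∈ ρ, 2 ≤ x := by
    intro x hx
    rw [hrho] at hx
    exact of_mem_filter hx
  have hρpos : ∀ x ∈ ρ, 0 < x := fun x hx => by have := hρ2 x hx; omega
  have hL : replicate w 1 + ρ = L := ones_decomp hpos
  have hρ1 : count 1 ρ = 0 := count_one_filter_two L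
  have hcntρ : cnt ρ (w+1) = cnt L (w+1) := by
    conv_rhs => rw [← hL]
    rw [cnt_add, cnt_replicate, if_neg (by omega)]
    omega
  have hPw : w + j ≤ cnt ρ (w+1) := by rw [hcntρ]; exact hcrank
  obtain ⟨H1, H2⟩ := durf_spec hPw
  rw [← hd] at H1 H2
  have hdw : w ≤ d := by
    by_contra hc
    push_neg at hc
    have := cnt_mono ρ (show d + 2 ≤ w + 1 by omega)
    omega
  have hd1 : 1 ≤ d := by omega
  have hTp_pos : ∀ x ∈ Tp, 0 < x := topOf_pos d ρ
  have hTc : card Tp ≤ d + j := by rw [hTpdef, card_topOf]; exact H2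
  have hBt_le : ∀ x ∈ Bt, x ≤ d + 1 := botOf_le d j ρ
  have hBt2 : ∀ x ∈ Bt, 2 ≤ x := botOf_ge_two hd1 hρ2
  have hsplit : ρ = rect d j Tp Bt := rect_split' H1 H2
  have hA'pos : ∀ x ∈ A', 0 < x := conj_pos Tp
  have hA'le : ∀ x ∈ A', x ≤ card Tp := mem_conj_le_card Tp
  have hA'dec : replicate ell 1 + g = A' := ones_decomp hA'pos
  have hBtdec : Bt = b2 + replicate v (d+1) := bot_decomp hBt_le
  have hg2 : ∀ x ∈ g, 2 ≤ x := by
    intro x hx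
    rw [hgdef] at hx
    exact of_mem_filter hx
  have hgpos : ∀ x ∈ g, 0 < x := fun x hx => by have := hg2 x hx; omega
  have hb22 : ∀ x ∈ b2, 2 ≤ x := by
    intro x hx
    rw [hb2def] at hx
    exact hBt2 x (mem_of_mem_filter hx)
  have hb2d : ∀ x ∈ b2, x ≤ d := by
    intro x hx
    rw [hb2def, mem_filter] at hx
    exact hx.2
  have hb2pos : ∀ x ∈ b2, 0 < x := fun x hx => by have := hb22 x hx; omega
  have hapos : ∀ x ∈ replicate ell 1 + b2, 0 < x := by
    intro x hx
    rw [mem_add] at hx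
    rcases hx with hx | hx
    · rw [eq_of_mem_replicate hx]; omega
    · exact hb2pos x hx
  have hbpos : ∀ x ∈ replicate (w + v*(d+1)) 1 + g, 0 < x := by
    intro x hx
    rw [mem_add] at hx
    rcases hx with hx | hx
    · rw [eq_of_mem_replicate hx]; omega
    · exact hgpos x hx
  have hcount1g : count 1 g = 0 := count_one_filter_two A'
  have hcount1b2 : count 1 b2 = 0 := by
    rw [count_eq_zero]
    intro hm
    have := hb22 1 hm
    omega
  -- sums
  have hsumL : w + ρ.sum = n := by
    rw [← hsum, ← hL, sum_add, sum_replicate, smul_eq_mul, mul_one]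
  have hsumρ : ρ.sum = (d+1) * (d+j) + Tp.sum + Bt.sum := by
    conv_lhs => rw [hsplit]
    exact rect_sum hTc
  have hsumA' : ell + g.sum = Tp.sum := by
    have : (replicate ell 1 + g).sum = A'.sum := by rw [hA'dec]
    rw [sum_add, sum_replicate, smul_eq_mul, mul_one] at this
    rw [this, hA'def, conj_sum]
  have hsumBt : b2.sum + v * (d+1) = Bt.sum := by
    conv_rhs => rw [hBtdec]
    rw [sum_add, sum_replicate, smul_eq_mul]
  constructor
  · -- RCond
    simp only [RCond]
    refine ⟨conj_pos _, conj_pos _, ?_, ?_, ?_⟩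
    · rw [card_conj]
      apply sup_le.2
      intro b hb
      rw [mem_add] at hb
      rcases hb with hb | hb
      · rw [eq_of_mem_replicate hb]; omega
      · exact hb2d b hb
    · rw [card_conj]
      apply sup_le.2
      intro b hb
      rw [mem_add] at hb
      rcases hb with hb | hb
      · rw [eq_of_mem_replicate hb]; omega
      · have h1 : b ≤ card Tp := hA'le b (mem_of_mem_filter hb)
        omega
    · rw [conj_sum, conj_sum, sum_add, sum_add, sum_replicate, sum_replicate,
         smul_eq_mul, smul_eq_mul, mul_one, mul_one]
      have e1 : w + v * (d+1) + g.sum + (ell + b2.sum) = w + Tp.sum + Bt.sum := by omega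
      omega
  · -- Gmap ∘ Fmap = L
    rw [Gmap]
    dsimp only
    have hb : conj (conj (replicate (w + v*(d+1)) 1 + g)) = replicate (w + v*(d+1)) 1 + g :=
      conj_conj hbpos
    have ha : conj (conj (replicate ell 1 + b2)) = replicate ell 1 + b2 := conj_conj hapos
    have hk : count 1 (replicate (w + v*(d+1)) 1 + g) = w + v * (d+1) := by
      rw [count_one_replicate_add, hcount1g, add_zero]
    have hmod : (w + v * (d+1)) % (d+1) = w := mod_helper (by omega)
    rw [hb, hk, if_neg (by omega)]
    rw [GB, hb, ha, hk]
    rw [count_one_replicate_add, hcount1b2, add_zero]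
    rw [filter_two_replicate_one, filter_two_replicate_one]
    rw [filter_eq_self.2 hg2, filter_eq_self.2 hb22]
    rw [hmod, div_helper (by omega)]
    rw [hA'dec, hA'def, conj_conj hTp_pos]
    have hBt' : replicate v (d+1) + b2 = Bt := by rw [add_comm, ← hBtdec]
    rw [hBt', ← hsplit]
    rw [add_comm, hL]

lemma map_add_sub_cancel (d : ℕ) (Tp : Multiset ℕ) :
    (Tp.map (fun x => x + (d+1))).map (fun x => x - (d+1)) = Tp := by
  rw [map_map]
  have : ∀ x ∈ Tp, ((fun x => x - (d+1)) ∘ (fun x => x + (d+1))) x = id x := by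
    intro x _
    simp only [Function.comp, id]
    omega
  rw [map_congr rfl this, map_id]

lemma caseB_right {n j d : ℕ} {α β : Multiset ℕ} (hn : 2 ≤ n)
    (hα : ∀ x ∈ α, 0 < x) (hβ : ∀ x ∈ β, 0 < x)
    (hcα : card α ≤ d) (hcβ : card β ≤ d + j)
    (hsum : (d+1) * (d+j) + α.sum + β.sum = n)
    (hr : ¬ count 1 (conj β) % (d+1) = 0) :
    (∀ x ∈ Gmap n j (d, α, β), 0 < x) ∧ (Gmap n j (d, α, β)).sum = n ∧
      NCond j (Gmap n j (d, α, β)) ∧ Fmap n j (Gmap n j (d, α, β)) = (d, α, β) := by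
  have hd1 : 1 ≤ d := by
    by_contra hc
    push_neg at hc
    have hd0 : d = 0 := by omega
    subst hd0
    simp [Nat.mod_one] at hr
  set a := conj α with hadef
  set b := conj β with hbdef
  set s := count 1 a with hsdef
  set a2 := a.filter (fun x => 2 ≤ x) with ha2def
  set g := b.filter (fun x => 2 ≤ x) with hgdef
  set k := count 1 b with hkdef
  set v := k / (d+1) with hvdef
  set r := k % (d+1) with hrdef
  have hr1 : 1 ≤ r := by omega
  have hrd : r < d + 1 := Nat.mod_lt _ (by omega)
  have hk : (d+1) * v + r = k := Nat.div_add_mod k (d+1)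
  have hapos : ∀ x ∈ a, 0 < x := conj_pos α
  have hbpos : ∀ x ∈ b, 0 < x := conj_pos β
  have ha_le : ∀ x ∈ a, x ≤ d := fun x hx => le_trans (mem_conj_le_card α x hx) hcα
  have hb_le : ∀ x ∈ b, x ≤ d + j := fun x hx => le_trans (mem_conj_le_card β x hx) hcβ
  have hadec : replicate s 1 + a2 = a := ones_decomp hapos
  have hbdec : replicate k 1 + g = b := ones_decomp hbpos
  have ha22 : ∀ x ∈ a2, 2 ≤ x := by
    intro x hx
    rw [ha2def] at hx
    exact of_mem_filter hx
  have ha2d : ∀ x ∈ a2, x ≤ d := by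
    intro x hx
    rw [ha2def] at hx
    exact ha_le x (mem_of_mem_filter hx)
  have hg2 : ∀ x ∈ g, 2 ≤ x := by
    intro x hx
    rw [hgdef] at hx
    exact of_mem_filter hx
  have hg_le : ∀ x ∈ g, x ≤ d + j := by
    intro x hx
    rw [hgdef] at hx
    exact hb_le x (mem_of_mem_filter hx)
  set Tp := conj (replicate s 1 + g) with hTpdef
  set Bt := replicate v (d+1) + a2 with hBtdef
  have hA'pos : ∀ x ∈ replicate s 1 + g, 0 < x := by
    intro x hx
    rw [mem_add] at hx
    rcases hx with hx | hx
    · rw [eq_of_mem_replicate hx]; omega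
    · have := hg2 x hx; omega
  have hTp_pos : ∀ x ∈ Tp, 0 < x := conj_pos _
  have hTc : card Tp ≤ d + j := by
    rw [hTpdef, card_conj]
    apply sup_le.2
    intro x hx
    rw [mem_add] at hx
    rcases hx with hx | hx
    · rw [eq_of_mem_replicate hx]; omega
    · exact hg_le x hx
  have hBt_le : ∀ x ∈ Bt, x ≤ d + 1 := by
    intro x hx
    rw [hBtdef, mem_add] at hx
    rcases hx with hx | hx
    · rw [eq_of_mem_replicate hx]
    · have := ha2d x hx; omega
  have hBt2 : ∀ x ∈ Bt, 2 ≤ x := by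
    intro x hx
    rw [hBtdef, mem_add] at hx
    rcases hx with hx | hx
    · rw [eq_of_mem_replicate hx]; omega
    · exact ha22 x hx
  have hBt_pos : ∀ x ∈ Bt, 0 < x := fun x hx => by have := hBt2 x hx; omega
  -- the inverse image
  have hGeq : Gmap n j (d, α, β) = rect d j Tp Bt + replicate r 1 := by
    rw [Gmap_mk, ← hbdef, ← hkdef, ← hrdef, if_neg hr, GB, ← hbdef, ← hadef, ← hkdef, ← hsdef,
      ← hgdef, ← ha2def, ← hvdef, ← hrdef, ← hTpdef, ← hBtdef]
  set ρ' := rect d j Tp Bt with hρ'def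
  have hρ'pos : ∀ x ∈ ρ', 0 < x := rect_pos' hBt_pos
  have hρ'2 : ∀ x ∈ ρ', 2 ≤ x := rect_ge_two hd1 hBt2
  have hL'pos : ∀ x ∈ ρ' + replicate r 1, 0 < x := by
    intro x hx
    rw [mem_add] at hx
    rcases hx with hx | hx
    · exact hρ'pos x hx
    · rw [eq_of_mem_replicate hx]; omega
  -- sums
  have hsTp : Tp.sum = s + g.sum := by
    rw [hTpdef, conj_sum, sum_add, sum_replicate, smul_eq_mul, mul_one]
  have hsBt : Bt.sum = v * (d+1) + a2.sum := by
    rw [hBtdef, sum_add, sum_replicate, smul_eq_mul]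
  have hsα : α.sum = s + a2.sum := by
    have h1 : a.sum = α.sum := by rw [hadef, conj_sum]
    have h2 : (replicate s 1 + a2).sum = a.sum := by rw [hadec]
    rw [sum_add, sum_replicate, smul_eq_mul, mul_one] at h2
    omega
  have hsβ : β.sum = k + g.sum := by
    have h1 : b.sum = β.sum := by rw [hbdef, conj_sum]
    have h2 : (replicate k 1 + g).sum = b.sum := by rw [hbdec]
    rw [sum_add, sum_replicate, smul_eq_mul, mul_one] at h2
    omega
  have hsρ' : ρ'.sum = (d+1) * (d+j) + Tp.sum + Bt.sum := rect_sum hTc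
  have hmulcomm : (d + 1) * v = v * (d + 1) := mul_comm _ _
  have hsL' : (ρ' + replicate r 1).sum = n := by
    rw [sum_add, sum_replicate, smul_eq_mul, mul_one, hsρ', hsTp, hsBt]
    omega
  -- counting the ones
  have hc1Bt : count 1 Bt = 0 := by
    rw [hBtdef, count_add, count_replicate, if_neg (by omega), count_eq_zero.2]
    intro hm
    have := ha22 1 hm
    omega
  have hc1ρ' : count 1 ρ' = 0 := by rw [hρ'def, rect_count_one hd1, hc1Bt]
  have hc1L' : count 1 (ρ' + replicate r 1) = r := by
    rw [count_add, hc1ρ', count_replicate, if_pos rfl]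
    omega
  -- cnt facts for ρ'
  have hcntL'ρ' : ∀ c, 2 ≤ c → cnt (ρ' + replicate r 1) c = cnt ρ' c := by
    intro c hc
    rw [cnt_add, cnt_replicate, if_neg (by omega)]
    omega
  have H1' : d + j ≤ cnt ρ' (d+1) := by
    have h2 : cnt ρ' (d+1) = (d+j) + cnt Bt (d+1) := by
      rw [hρ'def]
      exact rect_cnt_low hTc (le_refl _) (by omega)
    omega
  have H2' : cnt ρ' (d+2) = card Tp := by
    have h1 : d + 2 = d + 1 + 1 := rfl
    rw [hρ'def, h1, rect_cnt_high' hBt_le (le_refl 1), cnt_one Tp hTp_pos]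
  have hdurf : durf j ρ' = d := by
    obtain ⟨Ha, Hb⟩ := durf_spec (ρ := ρ') (j := j) (c := d) (by omega)
    exact durf_unique Ha Hb (by omega) (by omega)
  -- NCond
  have hNC : NCond j (ρ' + replicate r 1) := by
    rw [NCond, if_neg (by omega), hc1L', hcntL'ρ' (r+1) (by omega)]
    have h2 : cnt ρ' (r+1) = (d+j) + cnt Bt (r+1) := by
      rw [hρ'def]
      exact rect_cnt_low hTc (by omega) (by omega)
    omega
  rw [hGeq]
  refine ⟨hL'pos, hsL', hNC, ?_⟩
  -- now compute Fmap
  rw [Fmap, if_neg (by omega)]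
  have hfilt : (ρ' + replicate r 1).filter (fun x => 2 ≤ x) = ρ' := by
    rw [filter_add, filter_eq_self.2 hρ'2, filter_eq_nil.2 (fun x hx => by
      rw [eq_of_mem_replicate hx]; omega), add_zero]
  rw [hfilt, hdurf, hc1L', FBd]
  -- topOf and botOf of ρ'
  have htop : topOf d ρ' = Tp := by
    rw [topOf, hρ'def, rect_filter_top hTp_pos hBt_le, map_add_sub_cancel]
  have hbot : botOf d j ρ' = Bt := by
    rw [botOf, hρ'def, rect_filter_bot]
    have h1 : Bt.filter (fun x => x ≤ d) = a2 := by
      rw [hBtdef, filter_add, filter_eq_nil.2 (fun x hx => by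
        rw [eq_of_mem_replicate hx]; omega), zero_add, filter_eq_self.2 ha2d]
    have h2 : cnt (rect d j Tp Bt) (d+1) = (d+j) + cnt Bt (d+1) :=
      rect_cnt_low hTc (le_refl _) (by omega)
    have h3 : cnt Bt (d+1) = v := by
      rw [hBtdef, cnt_add, cnt_replicate, if_pos (le_refl _), cnt_eq_zero a2 (fun x hx => by
        have := ha2d x hx; omega)]
      omega
    rw [← hρ'def, h2, h3, h1]
    rw [show d + j + v - (d+j) = v by omega]
    rw [hBtdef, add_comm]
  rw [htop, hbot]
  have hconjTp : conj Tp = replicate s 1 + g := by rw [hTpdef, conj_conj hA'pos]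
  have hcount1Tp : count 1 (conj Tp) = s := by
    rw [hconjTp, count_one_replicate_add, count_one_filter_two]
    omega
  have hfiltTp : (conj Tp).filter (fun x => 2 ≤ x) = g := by
    rw [hconjTp, filter_two_replicate_one, hgdef, filter_filter]
    apply filter_congr
    intro x _
    omega
  have hcountBt : count (d+1) Bt = v := by
    rw [hBtdef, count_add, count_replicate, if_pos rfl, count_eq_zero.2 (fun hm => by
      have := ha2d (d+1) hm; omega)]
    omega
  have hfiltBt : Bt.filter (fun x => x ≤ d) = a2 := by
    rw [hBtdef, filter_add, filter_eq_nil.2 (fun x hx => by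
      rw [eq_of_mem_replicate hx]; omega), zero_add, filter_eq_self.2 ha2d]
  rw [hcount1Tp, hfiltTp, hcountBt, hfiltBt]
  have hαeq : conj (replicate s 1 + a2) = α := by
    rw [hadec, hadef, conj_conj hα]
  have hβeq : conj (replicate (r + v * (d+1)) 1 + g) = β := by
    rw [show r + v * (d+1) = k by omega, hbdec, hbdef, conj_conj hβ]
  rw [hαeq, hβeq]

lemma caseA_main {n j : ℕ} {L : Multiset ℕ} (hpos : ∀ x ∈ L, 0 < x) (hsum : L.sum = n)
    (hn : 2 ≤ n) (h1 : count 1 L = 0) (hcrank : j ≤ L.sup)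
    (hnotorph : ¬ (j = 0 ∧ card L ≤ 1)) :
    RCond n j (Fmap n j L) ∧ Gmap n j (Fmap n j L) = L := by
  rw [Fmap, if_pos h1, if_neg hnotorph]
  simp only [FAd]
  set ν := conj L with hνdef
  set d := durf j ν with hd
  set Tp := topOf d ν with hTpdef
  set Bt := botOf d j ν with hBtdef
  set u := count (d+1) Bt with hudef
  set t := if d = 0 then 0 else count 1 Bt with htdef
  set a2 := Bt.filter (fun x => 2 ≤ x ∧ x ≤ d) with ha2def
  -- basic facts
  have hνpos : ∀ x ∈ ν, 0 < x := conj_pos L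
  have hconjν : conj ν = L := by rw [hνdef, conj_conj hpos]
  have hcardL : cnt L 1 = card L := cnt_one L hpos
  have hcardν : cnt ν 1 = card ν := cnt_one ν hνpos
  have hP0 : 0 + j ≤ cnt ν (0+1) := by
    have hcs : card ν = L.sup := by rw [hνdef, card_conj]
    have h01 : (0:ℕ) + 1 = 1 := rfl
    rw [h01]
    omega
  obtain ⟨H1, H2⟩ := durf_spec hP0
  rw [← hd] at H1 H2
  have hLcard2 : j = 0 → 2 ≤ card L := by
    intro hj0
    by_contra hc
    exact hnotorph ⟨hj0, by omega⟩
  have hcntν2 : j = 0 → 2 ≤ card L → 1 ≤ cnt ν 2 := by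
    intro hj0 hc2
    have h := lt_cnt_conj_iff (M := L) (c := 2) (i := 0) (by omega)
    rw [← hνdef] at h
    have : 0 + 1 = 1 := rfl
    rw [this] at h
    omega
  have hd1 : j = 0 → 1 ≤ d := by
    intro hj0
    by_contra hc
    push_neg at hc
    have hd0 : d = 0 := by omega
    rw [hd0, hj0] at H2
    have := hcntν2 hj0 (hLcard2 hj0)
    have he : (0:ℕ) + 2 = 2 := rfl
    rw [he] at H2
    omega
  have hdj1 : 1 ≤ d + j := by
    rcases Nat.eq_zero_or_pos j with hj0 | hj1
    · have := hd1 hj0; omega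
    · omega
  have hTp_pos : ∀ x ∈ Tp, 0 < x := topOf_pos d ν
  have hTc : card Tp ≤ d + j := by rw [hTpdef, card_topOf]; exact H2
  have hBt_le : ∀ x ∈ Bt, x ≤ d + 1 := botOf_le d j ν
  have hBt_pos : ∀ x ∈ Bt, 0 < x := botOf_pos hνpos
  have hsplit : ν = rect d j Tp Bt := rect_split' H1 H2
  have hBt3 : Bt = replicate t 1 + replicate u (d+1) + a2 := bot3_decomp hBt_pos hBt_le
  -- no ones in conj Tp
  have hcntTp : ∀ c, 1 ≤ c → cnt Tp c = cnt ν (d+1+c) := by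
    intro c hc
    conv_rhs => rw [hsplit]
    rw [rect_cnt_high' hBt_le hc]
  have hg_no1 : count 1 (conj Tp) = 0 := by
    apply count_one_conj_eq_zero
    intro c hcontra
    rw [hcntTp (c+1) (by omega)] at hcontra
    have hne := cnt_conj_ne_one h1 (d + c + 1)
    rw [← hνdef] at hne
    have : d + 1 + (c + 1) = d + c + 1 + 1 := by omega
    rw [this] at hcontra
    exact hne hcontra
  have hgTp2 : ∀ x ∈ conj Tp, 2 ≤ x := by
    intro x hx
    have hp := conj_pos Tp x hx
    have hne : x ≠ 1 := by
      intro hx1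
      subst hx1
      rw [count_eq_zero] at hg_no1
      exact hg_no1 hx
    omega
  have hgTple : ∀ x ∈ conj Tp, x ≤ card Tp := mem_conj_le_card Tp
  have ha22 : ∀ x ∈ a2, 2 ≤ x ∧ x ≤ d := by
    intro x hx
    rw [ha2def, mem_filter] at hx
    exact hx.2
  have htpos : 1 ≤ t → 1 ≤ d := by
    intro ht
    rw [htdef] at ht
    by_cases hd0 : d = 0
    · rw [if_pos hd0] at ht; omega
    · omega
  have hαpos : ∀ x ∈ replicate t 1 + a2, 0 < x := by
    intro x hx
    rw [mem_add] at hx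
    rcases hx with hx | hx
    · rw [eq_of_mem_replicate hx]; omega
    · have := ha22 x hx; omega
  have hβpos : ∀ x ∈ replicate (u * (d+1)) 1 + conj Tp, 0 < x := by
    intro x hx
    rw [mem_add] at hx
    rcases hx with hx | hx
    · rw [eq_of_mem_replicate hx]; omega
    · have := hgTp2 x hx; omega
  -- sums
  have hsumν : ν.sum = (d+1) * (d+j) + Tp.sum + Bt.sum := by
    conv_lhs => rw [hsplit]
    exact rect_sum hTc
  have hsumνL : ν.sum = n := by rw [hνdef, conj_sum, hsum]
  have hsumBt : Bt.sum = t + u * (d+1) + a2.sum := by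
    conv_lhs => rw [hBt3]
    rw [sum_add, sum_add, sum_replicate, sum_replicate, smul_eq_mul, smul_eq_mul, mul_one]
  constructor
  · -- RCond
    simp only [RCond]
    refine ⟨conj_pos _, conj_pos _, ?_, ?_, ?_⟩
    · rw [card_conj]
      apply sup_le.2
      intro b hb
      rw [mem_add] at hb
      rcases hb with hb | hb
      · rw [eq_of_mem_replicate hb]
        exact htpos (by rcases (mem_replicate.1 hb) with ⟨ht, _⟩; omega)
      · exact (ha22 b hb).2
    · rw [card_conj]
      apply sup_le.2
      intro b hb
      rw [mem_add] at hb
      rcases hb with hb | hb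
      · rw [eq_of_mem_replicate hb]; omega
      · have := hgTple b hb; omega
    · rw [conj_sum, conj_sum, sum_add, sum_add, sum_replicate, sum_replicate,
         smul_eq_mul, smul_eq_mul, mul_one, mul_one, conj_sum]
      omega
  · -- round trip
    rw [Gmap_mk]
    have hb : conj (conj (replicate (u * (d+1)) 1 + conj Tp)) = replicate (u * (d+1)) 1 + conj Tp :=
      conj_conj hβpos
    have ha : conj (conj (replicate t 1 + a2)) = replicate t 1 + a2 := conj_conj hαpos
    have hk : count 1 (replicate (u * (d+1)) 1 + conj Tp) = u * (d+1) := by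
      rw [count_one_replicate_add, hg_no1, add_zero]
    have hmod : (u * (d+1)) % (d+1) = 0 := Nat.mul_mod_left u (d+1)
    rw [hb, hk, if_pos hmod]
    -- orphan check
    have hucount : u = cnt ν (d+1) - (d+j) := by
      rw [hudef, hBtdef, botOf, count_add, count_replicate, if_pos rfl, count_filter,
        if_neg (by omega), zero_add]
    have horph : ¬ (j = 0 ∧ d = 1 ∧ u * (d+1) = 0) := by
      rintro ⟨hj0, hdd, hk0⟩
      have hu0 : u = 0 := by
        rcases Nat.mul_eq_zero.1 hk0 with h | h
        · exact h
        · omega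
      have hc2 : 2 ≤ cnt L 2 := by
        have := cnt_two_of_no_ones h1
        have := hLcard2 hj0
        omega
      have hlt : 1 < cnt ν 2 := by
        have h := lt_cnt_conj_iff (M := L) (c := 2) (i := 1) (by omega)
        rw [← hνdef] at h
        have h2 : (1:ℕ) + 1 = 2 := rfl
        rw [h2] at h
        omega
      rw [hdd, hj0] at hucount
      have h11 : (1:ℕ) + 1 = 2 := rfl
      rw [h11] at hucount
      omega
    rw [if_neg horph, GA, hb, ha, hk]
    rw [count_one_replicate_add]
    have hc1a2 : count 1 a2 = 0 := by
      rw [count_eq_zero]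
      intro hm
      have := ha22 1 hm
      omega
    rw [hc1a2, add_zero]
    rw [filter_two_replicate_one, filter_two_replicate_one]
    rw [filter_eq_self.2 hgTp2]
    have ha2f : a2.filter (fun x => 2 ≤ x) = a2 := by
      rw [filter_eq_self]
      intro x hx
      exact (ha22 x hx).1
    rw [ha2f]
    rw [Nat.mul_div_cancel u (by omega : 0 < d + 1)]
    rw [conj_conj hTp_pos]
    have hδ : replicate t 1 + replicate u (d+1) + a2 = Bt := hBt3.symm
    -- need to match the shape: replicate t 1 + replicate u (d+1) + a2
    rw [hδ, ← hsplit, hconjν]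

lemma caseA_right {n j d : ℕ} {α β : Multiset ℕ} (hn : 2 ≤ n)
    (hα : ∀ x ∈ α, 0 < x) (hβ : ∀ x ∈ β, 0 < x)
    (hcα : card α ≤ d) (hcβ : card β ≤ d + j)
    (hsum : (d+1) * (d+j) + α.sum + β.sum = n)
    (hr : count 1 (conj β) % (d+1) = 0)
    (hno : ¬ (j = 0 ∧ d = 1 ∧ count 1 (conj β) = 0)) :
    (∀ x ∈ Gmap n j (d, α, β), 0 < x) ∧ (Gmap n j (d, α, β)).sum = n ∧
      NCond j (Gmap n j (d, α, β)) ∧ Fmap n j (Gmap n j (d, α, β)) = (d, α, β) := by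
  set a := conj α with hadef
  set b := conj β with hbdef
  set s := count 1 a with hsdef
  set a2 := a.filter (fun x => 2 ≤ x) with ha2def
  set g := b.filter (fun x => 2 ≤ x) with hgdef
  set k := count 1 b with hkdef
  set v := k / (d+1) with hvdef
  have hk : (d+1) * v = k := by
    have h := Nat.div_add_mod k (d+1)
    rw [hr] at h
    rw [← hvdef] at h
    omega
  have hapos : ∀ x ∈ a, 0 < x := conj_pos α
  have hbpos : ∀ x ∈ b, 0 < x := conj_pos β
  have ha_le : ∀ x ∈ a, x ≤ d := fun x hx => le_trans (mem_conj_le_card α x hx) hcα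
  have hb_le : ∀ x ∈ b, x ≤ d + j := fun x hx => le_trans (mem_conj_le_card β x hx) hcβ
  have hadec : replicate s 1 + a2 = a := ones_decomp hapos
  have hbdec : replicate k 1 + g = b := ones_decomp hbpos
  have ha22 : ∀ x ∈ a2, 2 ≤ x := by
    intro x hx
    rw [ha2def] at hx
    exact of_mem_filter hx
  have ha2d : ∀ x ∈ a2, x ≤ d := by
    intro x hx
    rw [ha2def] at hx
    exact ha_le x (mem_of_mem_filter hx)
  have hg2 : ∀ x ∈ g, 2 ≤ x := by
    intro x hx
    rw [hgdef] at hx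
    exact of_mem_filter hx
  have hg_le : ∀ x ∈ g, x ≤ d + j := by
    intro x hx
    rw [hgdef] at hx
    exact hb_le x (mem_of_mem_filter hx)
  have hc1g : count 1 g = 0 := count_one_filter_two b
  have hc1a2 : count 1 a2 = 0 := count_one_filter_two a
  -- degenerate case d + j = 0 is impossible
  have hdj1 : 1 ≤ d + j := by
    by_contra hc
    push_neg at hc
    have hd0 : d = 0 := by omega
    have hj0 : j = 0 := by omega
    have hα0 : α = 0 := card_eq_zero.1 (by omega)
    have hβ0 : β = 0 := card_eq_zero.1 (by omega)
    rw [hα0, hβ0, hd0, hj0] at hsum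
    simp at hsum
    omega
  have hs0 : d = 0 → s = 0 := by
    intro hd0
    have hα0 : α = 0 := card_eq_zero.1 (by omega)
    rw [hsdef, hadef, hα0, conj_zero]
    rfl
  set Tp := conj g with hTpdef
  set δ := replicate s 1 + replicate v (d+1) + a2 with hδdef
  have hTp_pos : ∀ x ∈ Tp, 0 < x := conj_pos g
  have hTc : card Tp ≤ d + j := by
    rw [hTpdef, card_conj]
    exact sup_le.2 hg_le
  have hδ_le : ∀ x ∈ δ, x ≤ d + 1 := by
    intro x hx
    rw [hδdef, mem_add, mem_add] at hx
    rcases hx with (hx | hx) | hx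
    · rw [eq_of_mem_replicate hx]; omega
    · rw [eq_of_mem_replicate hx]
    · have := ha2d x hx; omega
  have hδ_pos : ∀ x ∈ δ, 0 < x := by
    intro x hx
    rw [hδdef, mem_add, mem_add] at hx
    rcases hx with (hx | hx) | hx
    · rw [eq_of_mem_replicate hx]; omega
    · rw [eq_of_mem_replicate hx]; omega
    · have := ha22 x hx; omega
  have hGeq : Gmap n j (d, α, β) = conj (rect d j Tp δ) := by
    rw [Gmap_mk, ← hbdef, ← hkdef, if_pos hr, if_neg hno, GA, ← hbdef, ← hadef, ← hkdef,
      ← hsdef, ← hgdef, ← ha2def, ← hvdef, ← hTpdef, ← hδdef]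
  set ν' := rect d j Tp δ with hν'def
  have hν'pos : ∀ x ∈ ν', 0 < x := rect_pos' hδ_pos
  have hL'pos : ∀ x ∈ conj ν', 0 < x := conj_pos ν'
  -- cnt facts
  have hcnt_low : ∀ c, 1 ≤ c → c ≤ d + 1 → cnt ν' c = (d+j) + cnt δ c := by
    intro c h1 h2
    rw [hν'def]
    exact rect_cnt_low hTc h2 h1
  have hcnt_high : ∀ c, 1 ≤ c → cnt ν' (d+1+c) = cnt Tp c := by
    intro c h1
    rw [hν'def]
    exact rect_cnt_high' hδ_le h1
  -- sums
  have hsTp : Tp.sum = g.sum := by rw [hTpdef, conj_sum]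
  have hsδ : δ.sum = s + v * (d+1) + a2.sum := by
    rw [hδdef, sum_add, sum_add, sum_replicate, sum_replicate, smul_eq_mul, smul_eq_mul, mul_one]
  have hsα : α.sum = s + a2.sum := by
    have h1 : a.sum = α.sum := by rw [hadef, conj_sum]
    have h2 : (replicate s 1 + a2).sum = a.sum := by rw [hadec]
    rw [sum_add, sum_replicate, smul_eq_mul, mul_one] at h2
    omega
  have hsβ : β.sum = k + g.sum := by
    have h1 : b.sum = β.sum := by rw [hbdef, conj_sum]
    have h2 : (replicate k 1 + g).sum = b.sum := by rw [hbdec]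
    rw [sum_add, sum_replicate, smul_eq_mul, mul_one] at h2
    omega
  have hmc : (d+1) * v = v * (d+1) := mul_comm _ _
  have hsL' : (conj ν').sum = n := by
    rw [conj_sum, hν'def, rect_sum hTc, hsTp, hsδ]
    omega
  -- no ones in L'
  have hcntδd1 : cnt δ (d+1) = v := by
    rw [hδdef, cnt_add, cnt_add, cnt_replicate, cnt_replicate, if_pos (le_refl _),
      cnt_eq_zero a2 (fun x hx => by have := ha2d x hx; omega)]
    by_cases hd0 : d = 0
    · rw [if_pos (by omega)]
      have := hs0 hd0
      omega
    · rw [if_neg (by omega)]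
      omega
  have hnoones : ∀ c, cnt ν' (c+1) ≠ 1 := by
    intro c hcon
    by_cases hc : c + 1 ≤ d + 1
    · rw [hcnt_low (c+1) (by omega) hc] at hcon
      -- d + j + cnt δ (c+1) = 1 with 1 ≤ d+j : so d+j = 1, cnt δ (c+1) = 0
      have hdj : d + j = 1 := by omega
      have hδ0 : cnt δ (c+1) = 0 := by omega
      have hδd1 : cnt δ (d+1) = 0 := by
        have := cnt_mono δ (show c + 1 ≤ d + 1 from hc)
        omega
      have hv0 : v = 0 := by rw [← hcntδd1]; exact hδd1
      have hk0 : k = 0 := by rw [← hk, hv0, Nat.mul_zero]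
      rcases Nat.eq_zero_or_pos d with hd0 | hd1
      · -- d = 0, j = 1 : show n = 1, contradiction
        have hj1 : j = 1 := by omega
        have hss : s = 0 := hs0 hd0
        have hb1 : ∀ x ∈ b, x ≤ 1 := fun x hx => by have := hb_le x hx; omega
        have hb0 : b = replicate (count 1 b) 1 := all_one_decomp hbpos hb1
        have hg0 : g.sum = 0 := by
          have : (replicate k 1 + g).sum = b.sum := by rw [hbdec]
          rw [sum_add, sum_replicate, smul_eq_mul, mul_one] at this
          have hbsum : b.sum = k := by
            conv_lhs => rw [hb0]
            rw [sum_replicate, smul_eq_mul, mul_one, hkdef]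
          omega
        have hα0 : α = 0 := card_eq_zero.1 (by omega)
        have hαs : α.sum = 0 := by rw [hα0]; rfl
        have hprod : (d+1) * (d+j) = 1 := by rw [hd0, hj1]
        omega
      · -- d = 1, j = 0 : orphan, contradiction with hno
        have hd1' : d = 1 := by omega
        have hj0 : j = 0 := by omega
        exact hno ⟨hj0, hd1', by omega⟩
    · push_neg at hc
      set c' := c + 1 - (d+1) with hc'def
      have hc'1 : 1 ≤ c' := by omega
      have hcc : c + 1 = d + 1 + c' := by omega
      rw [hcc, hcnt_high c' hc'1] at hcon
      have := cnt_conj_ne_one hc1g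
      rw [← hTpdef] at this
      rcases Nat.exists_eq_add_of_le hc'1 with ⟨c'', hc''⟩
      rw [hc''] at hcon
      have h2 : 1 + c'' = c'' + 1 := by omega
      rw [h2] at hcon
      exact this c'' hcon
  have hc1L' : count 1 (conj ν') = 0 := count_one_conj_eq_zero hnoones
  -- cardinality of ν'
  have hcardν' : card ν' = (d + j) + card δ := by
    rw [hν'def, rect, card_add, card_add, card_map, card_replicate]
    omega
  have hsupL' : (conj ν').sup = card ν' := sup_conj hν'pos
  have hNC : NCond j (conj ν') := by
    rw [NCond, if_pos hc1L', hsupL']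
    omega
  rw [hGeq]
  refine ⟨hL'pos, hsL', hNC, ?_⟩
  -- compute Fmap (conj ν')
  have hcardL' : 2 ≤ card (conj ν') → ¬ (j = 0 ∧ card (conj ν') ≤ 1) := by
    intro h hcontra
    omega
  have hsupν'  : j = 0 → 2 ≤ card (conj ν') := by
    intro hj0
    rw [card_conj]
    have hd1 : 1 ≤ d := by omega
    have hpos' : 0 < cnt ν' (d+1) := by
      rw [hcnt_low (d+1) (by omega) (le_refl _)]
      omega
    rw [cnt_pos_iff] at hpos'
    obtain ⟨x, hx, hxd⟩ := hpos'
    have := le_sup hx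
    omega
  have hnotorph : ¬ (j = 0 ∧ card (conj ν') ≤ 1) := by
    rintro ⟨hj0, hcard⟩
    have := hsupν' hj0
    omega
  rw [Fmap, if_pos hc1L', if_neg hnotorph]
  have hconjL' : conj (conj ν') = ν' := conj_conj hν'pos
  rw [hconjL']
  -- durf
  have H1' : d + j ≤ cnt ν' (d+1) := by
    rw [hcnt_low (d+1) (by omega) (le_refl _)]
    omega
  have H2' : cnt ν' (d+2) = card Tp := by
    have h1 : d + 2 = d + 1 + 1 := rfl
    rw [h1, hcnt_high 1 (le_refl _), cnt_one Tp hTp_pos]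
  have hdurf : durf j ν' = d := by
    obtain ⟨Ha, Hb⟩ := durf_spec (ρ := ν') (j := j) (c := d) (by omega)
    exact durf_unique Ha Hb (by omega) (by omega)
  rw [hdurf, FAd]
  -- components
  have htop : topOf d ν' = Tp := by
    rw [topOf, hν'def, rect_filter_top hTp_pos hδ_le, map_add_sub_cancel]
  have hfδ : δ.filter (fun x => x ≤ d) = replicate s 1 + a2 := by
    rw [hδdef, filter_add, filter_add]
    have h2 : (replicate v (d+1)).filter (fun x => x ≤ d) = 0 :=
      filter_eq_nil.2 (fun x hx => by rw [eq_of_mem_replicate hx]; omega)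
    have h3 : a2.filter (fun x => x ≤ d) = a2 := filter_eq_self.2 ha2d
    have h1 : (replicate s 1).filter (fun x => x ≤ d) = replicate s 1 := by
      by_cases hd0 : d = 0
      · have := hs0 hd0
        rw [this]
        rfl
      · exact filter_eq_self.2 (fun x hx => by rw [eq_of_mem_replicate hx]; omega)
    rw [h1, h2, h3, add_zero]
  have hbot : botOf d j ν' = δ := by
    rw [botOf, hν'def, rect_filter_bot, ← hν'def]
    rw [hfδ, hcnt_low (d+1) (by omega) (le_refl _), hcntδd1]
    rw [show d + j + v - (d+j) = v by omega]
    rw [hδdef, add_right_comm]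
  rw [htop, hbot]
  -- recover the pieces
  have hcount1δ : (if d = 0 then 0 else count 1 δ) = s := by
    by_cases hd0 : d = 0
    · rw [if_pos hd0, hs0 hd0]
    · rw [if_neg hd0, hδdef, count_add, count_add, count_replicate, count_replicate,
        if_pos rfl, if_neg (by omega), hc1a2]
      omega
  have hcountd1δ : count (d+1) δ = v := by
    rw [hδdef, count_add, count_add, count_replicate, count_replicate, if_pos rfl]
    have h3 : count (d+1) a2 = 0 := count_eq_zero.2 (fun hm => by have := ha2d _ hm; omega)
    by_cases hd0 : d = 0
    · rw [if_pos (by omega), hs0 hd0, h3]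
      omega
    · rw [if_neg (by omega), h3]
      omega
  have hfδ2 : δ.filter (fun x => 2 ≤ x ∧ x ≤ d) = a2 := by
    rw [hδdef, filter_add, filter_add]
    have h1 : (replicate s 1).filter (fun x => 2 ≤ x ∧ x ≤ d) = 0 :=
      filter_eq_nil.2 (fun x hx => by rw [eq_of_mem_replicate hx]; omega)
    have h2 : (replicate v (d+1)).filter (fun x => 2 ≤ x ∧ x ≤ d) = 0 :=
      filter_eq_nil.2 (fun x hx => by rw [eq_of_mem_replicate hx]; omega)
    have h3 : a2.filter (fun x => 2 ≤ x ∧ x ≤ d) = a2 :=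
      filter_eq_self.2 (fun x hx => ⟨ha22 x hx, ha2d x hx⟩)
    rw [h1, h2, h3, zero_add, zero_add]
  rw [hcount1δ, hcountd1δ, hfδ2]
  have hαeq : conj (replicate s 1 + a2) = α := by rw [hadec, hadef, conj_conj hα]
  have hβeq : conj (replicate (v * (d+1)) 1 + conj Tp) = β := by
    rw [hTpdef, conj_conj (fun x hx => by have := hg2 x hx; omega)]
    rw [show v * (d+1) = k by omega, hbdec, hbdef, conj_conj hβ]
  rw [hαeq, hβeq]

lemma orph_main {n : ℕ} {L : Multiset ℕ} (hpos : ∀ x ∈ L, 0 < x) (hsum : L.sum = n)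
    (hn : 2 ≤ n) (h1 : count 1 L = 0) (hcard : card L ≤ 1) :
    RCond n 0 (Fmap n 0 L) ∧ Gmap n 0 (Fmap n 0 L) = L := by
  have hLn : L = {n} := by
    rcases Nat.eq_zero_or_pos (card L) with hc | hc
    · exfalso
      have : L = 0 := card_eq_zero.1 hc
      rw [this] at hsum
      simp at hsum
      omega
    · have hc1 : card L = 1 := by omega
      obtain ⟨a, ha⟩ := card_eq_one.1 hc1
      rw [ha] at hsum ⊢
      simp at hsum
      rw [hsum]
  rw [Fmap, if_pos h1, if_pos ⟨rfl, hcard⟩]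
  constructor
  · refine ⟨conj_pos _, by simp, ?_, by simp, ?_⟩
    · rw [card_conj]
      exact sup_le.2 (fun b hb => by rw [eq_of_mem_replicate hb])
    · have h2 : (conj (replicate (n-2) 1)).sum = n - 2 := by
        rw [conj_sum, sum_replicate, smul_eq_mul, mul_one]
      simp only [Multiset.sum_zero, h2]
      omega
  · rw [Gmap_mk, conj_zero]
    have hc0 : count 1 (0 : Multiset ℕ) = 0 := rfl
    rw [hc0, if_pos (by omega), if_pos ⟨rfl, rfl, rfl⟩, hLn]

lemma orph_right {n d : ℕ} {α β : Multiset ℕ} (hn : 2 ≤ n)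
    (hα : ∀ x ∈ α, 0 < x) (hβ : ∀ x ∈ β, 0 < x)
    (hcα : card α ≤ d) (hcβ : card β ≤ d + 0)
    (hsum : (d+1) * (d+0) + α.sum + β.sum = n)
    (hd1 : d = 1) (hk0 : count 1 (conj β) = 0) :
    (∀ x ∈ Gmap n 0 (d, α, β), 0 < x) ∧ (Gmap n 0 (d, α, β)).sum = n ∧
      NCond 0 (Gmap n 0 (d, α, β)) ∧ Fmap n 0 (Gmap n 0 (d, α, β)) = (d, α, β) := by
  subst hd1
  -- first show β = 0
  have hb_le : ∀ x ∈ conj β, x ≤ 1 := fun x hx => le_trans (mem_conj_le_card β x hx) hcβ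
  have hb0 : conj β = 0 := by
    rw [all_one_decomp (conj_pos β) hb_le, hk0]
    rfl
  have hβ0 : β = 0 := by
    rw [← conj_conj hβ, hb0, conj_zero]
  -- next identify α
  have ha_le : ∀ x ∈ conj α, x ≤ 1 := fun x hx => le_trans (mem_conj_le_card α x hx) hcα
  have hadec : conj α = replicate (count 1 (conj α)) 1 := all_one_decomp (conj_pos α) ha_le
  have hsa : (conj α).sum = α.sum := conj_sum α
  have hs : count 1 (conj α) = n - 2 := by
    have h2 : (replicate (count 1 (conj α)) 1).sum = count 1 (conj α) := by
      rw [sum_replicate, smul_eq_mul, mul_one]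
    rw [← hadec] at h2
    rw [hβ0] at hsum
    simp only [Multiset.sum_zero] at hsum
    omega
  have hGeq : Gmap n 0 (1, α, β) = {n} := by
    rw [Gmap_mk, hb0]
    have hc0 : count 1 (0 : Multiset ℕ) = 0 := rfl
    rw [hc0, if_pos (by omega), if_pos ⟨rfl, rfl, rfl⟩]
  rw [hGeq]
  have hpos : ∀ x ∈ ({n} : Multiset ℕ), 0 < x := by
    intro x hx
    rw [mem_singleton] at hx
    omega
  have hsum' : ({n} : Multiset ℕ).sum = n := by simp
  have hc1n : count 1 ({n} : Multiset ℕ) = 0 := by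
    rw [count_eq_zero]
    intro hm
    rw [mem_singleton] at hm
    omega
  have hcardn : card ({n} : Multiset ℕ) = 1 := by simp
  refine ⟨hpos, hsum', ?_, ?_⟩
  · rw [NCond, if_pos hc1n]
    omega
  · rw [Fmap, if_pos hc1n, if_pos ⟨rfl, by omega⟩]
    have hα : conj (replicate (n-2) 1) = α := by
      rw [← hs, ← hadec, conj_conj hα]
    rw [hα, hβ0]


end CrankPf

namespace CrankPf
open Multiset

lemma key_forward {n j : ℕ} (hn : 2 ≤ n) (L : Multiset ℕ) (hpos : ∀ x ∈ L, 0 < x)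
    (hsum : L.sum = n) (hNC : NCond j L) :
    RCond n j (Fmap n j L) ∧ Gmap n j (Fmap n j L) = L := by
  rw [NCond] at hNC
  by_cases h1 : count 1 L = 0
  · rw [if_pos h1] at hNC
    by_cases horph : j = 0 ∧ card L ≤ 1
    · obtain ⟨hj0, hcard⟩ := horph
      subst hj0
      exact orph_main hpos hsum hn h1 hcard
    · exact caseA_main hpos hsum hn h1 hNC horph
  · rw [if_neg h1] at hNC
    exact caseB_main hpos hsum (by omega) hNC

lemma key_backward {n j : ℕ} (hn : 2 ≤ n) (t : ℕ × Multiset ℕ × Multiset ℕ)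
    (hR : RCond n j t) :
    (∀ x ∈ Gmap n j t, 0 < x) ∧ (Gmap n j t).sum = n ∧
      NCond j (Gmap n j t) ∧ Fmap n j (Gmap n j t) = t := by
  obtain ⟨d, α, β⟩ := t
  obtain ⟨hα, hβ, hcα, hcβ, hsum⟩ := hR
  by_cases hr : count 1 (conj β) % (d+1) = 0
  · by_cases horph : j = 0 ∧ d = 1 ∧ count 1 (conj β) = 0
    · obtain ⟨hj0, hd1, hk0⟩ := horph
      subst hj0
      exact orph_right hn hα hβ hcα hcβ hsum hd1 hk0
    · exact caseA_right hn hα hβ hcα hcβ hsum hr horph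
  · exact caseB_right hn hα hβ hcα hcβ hsum hr

end CrankPf

lemma partMu_eq {n : ℕ} (P : Nat.Partition n) :
    partMu P = CrankPf.cnt P.parts (partOmega P + 1) := by
  rw [partMu, CrankPf.cnt, Multiset.countP_eq_card_filter]
  have h : Multiset.filter (fun x => partOmega P < x) P.parts
      = Multiset.filter (fun x => partOmega P + 1 ≤ x) P.parts :=
    Multiset.filter_congr (fun x _ => by omega)
  rw [h]

lemma crank_iff_NCond {n j : ℕ} (P : Nat.Partition n) :
    (j : ℤ) ≤ crank P ↔ CrankPf.NCond j P.parts := by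
  have homega : partOmega P = Multiset.count 1 P.parts := rfl
  rw [crank, CrankPf.NCond, homega]
  by_cases h1 : Multiset.count 1 P.parts = 0
  · rw [if_pos h1, if_pos h1]
    exact ⟨fun h => by exact_mod_cast h, fun h => by exact_mod_cast h⟩
  · rw [if_neg h1, if_neg h1, partMu_eq, homega]
    omega

/-- The number of partitions of `n` with crank at least `j` equals the number of triples
`(d, α, β)` where `α` is a partition with at most `d` parts, `β` is a partition with at
most `d + j` parts, and `(d+1)(d+j) + |α| + |β| = n`.  A partition of unrestricted weight
is represented by its multiset of (positive) parts. -/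
theorem stmt_2 (n j : ℕ) (hn : 2 ≤ n) :
    Nat.card {P : Nat.Partition n // (j : ℤ) ≤ crank P} =
      Nat.card {t : ℕ × Multiset ℕ × Multiset ℕ //
        (∀ x ∈ t.2.1, 0 < x) ∧ (∀ x ∈ t.2.2, 0 < x) ∧
        Multiset.card t.2.1 ≤ t.1 ∧ Multiset.card t.2.2 ≤ t.1 + j ∧
        (t.1 + 1) * (t.1 + j) + t.2.1.sum + t.2.2.sum = n} := by
  apply Nat.card_congr
  refine {
    toFun := fun P => ⟨CrankPf.Fmap n j P.1.parts,
      (CrankPf.key_forward hn P.1.parts (fun x hx => P.1.parts_pos hx) P.1.parts_sum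
        ((crank_iff_NCond P.1).1 P.2)).1⟩
    invFun := fun t => ⟨⟨CrankPf.Gmap n j t.1,
        fun hx => (CrankPf.key_backward hn t.1 t.2).1 _ hx,
        (CrankPf.key_backward hn t.1 t.2).2.1⟩,
      (crank_iff_NCond _).2 (CrankPf.key_backward hn t.1 t.2).2.2.1⟩
    left_inv := ?_
    right_inv := ?_ }
  · rintro ⟨P, hP⟩
    apply Subtype.ext
    apply Nat.Partition.ext
    exact (CrankPf.key_forward hn P.parts (fun x hx => P.parts_pos hx) P.parts_sum
      ((crank_iff_NCond P).1 hP)).2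
  · rintro ⟨t, ht⟩
    apply Subtype.ext
    exact (CrankPf.key_backward hn t ht).2.2.2
end

section
/- Let j ≥ 0 be an integer and let λ be a partition with at least one part equal to 1 (i.e. ω(λ) > 0). Let d be the parameter of the j-Durfee rectangle of λ, i.e. the largest integer d ≥ 0 such that λ has at least d parts and λ_d ≥ d + j. Then crank(λ) ≤ −j if and only if ω(λ) ≥ d + j. -/
/-- Let `j ≥ 0` and let `P` be a partition with at least one part equal to `1`.
If `d` is the parameter of the `j`-Durfee rectangle of `P`, i.e. the largest `d` such
that `P` has at least `d` parts that are at least `d + j`, then `crank(P) ≤ -j` if and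
only if the number of parts equal to `1` is at least `d + j`. -/
theorem stmt_3 (n j d : ℕ) (P : Nat.Partition n) (hω : 0 < partOmega P)
    (hd : d ≤ Multiset.card (P.parts.filter (fun x => d + j ≤ x)))
    (hdmax : ∀ d' : ℕ, d' ≤ Multiset.card (P.parts.filter (fun x => d' + j ≤ x)) → d' ≤ d) :
    crank P ≤ -(j : ℤ) ↔ d + j ≤ partOmega P := by
  have hcrank : crank P = (partMu P : ℤ) - (partOmega P : ℤ) := by
    simp [crank, hω.ne']
  rw [hcrank]
  have hmu : partMu P = Multiset.card (P.parts.filter (fun x => partOmega P + 1 ≤ x)) := by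
    rfl
  constructor
  · intro h
    have hle : partMu P + j ≤ partOmega P := by
      omega
    by_contra hcon
    have hcon' : partOmega P + 1 ≤ d + j := by omega
    have hsub : P.parts.filter (fun x => d + j ≤ x) ≤
        P.parts.filter (fun x => partOmega P + 1 ≤ x) := by
      apply Multiset.monotone_filter_right
      intro x hx
      omega
    have := Multiset.card_le_card hsub
    omega
  · intro h
    by_contra hcon
    push_neg at hcon
    have hjω : j ≤ partOmega P := le_trans (Nat.le_add_left j d) h
    have hωμ : partOmega P + 1 ≤ partMu P + j := by omega
    set d' : ℕ := partOmega P + 1 - j with hd'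
    have hd'j : d' + j = partOmega P + 1 := by omega
    have hdd' : d' ≤ Multiset.card (P.parts.filter (fun x => d' + j ≤ x)) := by
      have : (P.parts.filter (fun x => d' + j ≤ x)) =
          (P.parts.filter (fun x => partOmega P + 1 ≤ x)) := by
        apply Multiset.filter_congr
        intro x _
        rw [hd'j]
      rw [this, ← hmu]
      omega
    have := hdmax d' hdd'
    omega
end

section
/- For all integers n ≥ 0 and j ≥ 0, the alternating sum ∑_{k≥0} (−1)^k p(n − k(k+1)/2 − j(k+1)) equals the number of triples (d, α, β) where d ≥ 0 is an integer, α is a partition with at most d parts, β is a partition with at most d + j parts, and (d+1)(d+j) + |α| + |β| = n. -/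
/-- The partition-counting function, extended by `0` to negative arguments. -/
noncomputable def pZ (m : ℤ) : ℤ :=
  if 0 ≤ m then (Nat.card (Nat.Partition m.toNat) : ℤ) else 0

namespace Stmt4
open Multiset

def mcount (t : ℕ) (s : Multiset ℕ) : ℕ := (s.filter (fun x => t ≤ x)).card

lemma mcount_le_card (t : ℕ) (s : Multiset ℕ) : mcount t s ≤ s.card :=
  card_le_card (filter_le _ s)

lemma mcount_anti {t t' : ℕ} (h : t ≤ t') (s : Multiset ℕ) : mcount t' s ≤ mcount t s := by
  apply card_le_card
  apply monotone_filter_right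
  intro x hx; exact le_trans h hx

lemma mcount_add (t : ℕ) (s s' : Multiset ℕ) :
    mcount t (s + s') = mcount t s + mcount t s' := by
  simp [mcount, filter_add]

lemma mcount_zero (t : ℕ) : mcount t (0 : Multiset ℕ) = 0 := by simp [mcount]

lemma mcount_cons (t a : ℕ) (s : Multiset ℕ) :
    mcount t (a ::ₘ s) = (if t ≤ a then 1 else 0) + mcount t s := by
  by_cases h : t ≤ a <;> simp [mcount, filter_cons, h] <;> omega

lemma mcount_replicate (t c v : ℕ) :
    mcount t (replicate c v) = if t ≤ v then c else 0 := by
  by_cases h : t ≤ v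
  · simp only [mcount, if_pos h]
    rw [filter_eq_self.2 (fun x hx => by rwa [eq_of_mem_replicate hx]), card_replicate]
  · simp only [mcount, if_neg h]
    rw [filter_eq_nil.2 (fun x hx => by rw [eq_of_mem_replicate hx]; exact h), card_zero]

lemma mcount_eq_zero_of_lt {t : ℕ} {s : Multiset ℕ} (h : ∀ x ∈ s, x < t) :
    mcount t s = 0 := by
  simp only [mcount, card_eq_zero, filter_eq_nil]
  intro x hx; exact not_le.2 (h x hx)

lemma mcount_one {s : Multiset ℕ} (h : ∀ x ∈ s, 0 < x) : mcount 1 s = s.card := by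
  unfold mcount
  rw [show (filter (fun x => 1 ≤ x) s) = s from filter_eq_self.2 (fun x hx => h x hx)]

lemma mcount_map_add {t c : ℕ} (s : Multiset ℕ) (h : c < t) :
    mcount t (s.map (· + c)) = mcount (t - c) s := by
  induction s using Multiset.induction with
  | empty => simp [mcount_zero]
  | cons b s ih =>
    rw [map_cons, mcount_cons, mcount_cons, ih]
    congr 1
    by_cases hb : t ≤ b + c
    · rw [if_pos hb, if_pos (by omega)]
    · rw [if_neg hb, if_neg (by omega)]

lemma mcount_map_add_of_le {t c : ℕ} (s : Multiset ℕ) (h : t ≤ c) :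
    mcount t (s.map (· + c)) = s.card := by
  unfold mcount
  rw [filter_eq_self.2, card_map]
  intro x hx
  obtain ⟨y, _, rfl⟩ := mem_map.1 hx
  omega

lemma mcount_succ_aux (a : ℕ) (s : Multiset ℕ) :
    mcount a s = s.count a + mcount (a + 1) s := by
  induction s using Multiset.induction with
  | empty => simp [mcount_zero]
  | cons b s ih =>
    rw [mcount_cons, mcount_cons, count_cons, ih]
    by_cases h : a ≤ b
    · by_cases h2 : a + 1 ≤ b
      · have : ¬ (a = b) := by omega
        simp only [if_pos h, if_pos h2, if_neg this]
        omega
      · have : a = b := by omega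
        simp only [if_pos h, if_neg h2, if_pos this]
        omega
    · have h2 : ¬ (a+1 ≤ b) := by omega
      have : ¬ (a = b) := by omega
      simp only [if_neg h, if_neg h2, if_neg this]
      omega

lemma mcount_ext {s s' : Multiset ℕ} (hs : ∀ x ∈ s, 0 < x) (hs' : ∀ x ∈ s', 0 < x)
    (h : ∀ t, 1 ≤ t → mcount t s = mcount t s') : s = s' := by
  ext a
  rcases Nat.eq_zero_or_pos a with rfl | ha
  · rw [count_eq_zero_of_notMem, count_eq_zero_of_notMem]
    · intro hm; exact absurd (hs' 0 hm) (by simp)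
    · intro hm; exact absurd (hs 0 hm) (by simp)
  · have h1 := mcount_succ_aux a s
    have h2 := mcount_succ_aux a s'
    have e1 := h a ha
    have e2 := h (a+1) (by omega)
    omega

lemma sum_eq_mcount_sum {s : Multiset ℕ} {N : ℕ} (h : ∀ x ∈ s, x ≤ N) :
    s.sum = ∑ t ∈ Finset.range N, mcount (t + 1) s := by
  induction s using Multiset.induction with
  | empty => simp [mcount_zero]
  | cons b s ih =>
    have hb : b ≤ N := h b (mem_cons_self _ _)
    have ihs := ih (fun x hx => h x (mem_cons_of_mem hx))
    rw [sum_cons, ihs]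
    simp only [mcount_cons]
    rw [Finset.sum_add_distrib]
    congr 1
    have e1 : ∀ t ∈ Finset.range N, (if t + 1 ≤ b then (1:ℕ) else 0) = if t ∈ Finset.range b then 1 else 0 := by
      intro t _
      by_cases h : t + 1 ≤ b
      · rw [if_pos h, if_pos (Finset.mem_range.2 (by omega))]
      · rw [if_neg h, if_neg (by simp; omega)]
    rw [Finset.sum_congr rfl e1, Finset.sum_ite_mem, Finset.inter_eq_right.2, Finset.sum_const]
    · simp
    · intro x hx
      simp only [Finset.mem_range] at *
      omega

lemma mcount_pos_iff {t : ℕ} {s : Multiset ℕ} :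
    0 < mcount t s ↔ ∃ x ∈ s, t ≤ x := by
  simp [mcount, card_pos_iff_exists_mem]


/-! ### Conjugation -/

def conj (s : Multiset ℕ) : Multiset ℕ :=
  (Multiset.range s.sup).map (fun i => mcount (i + 1) s)

lemma sup_attained {s : Multiset ℕ} : s.sup = 0 ∨ s.sup ∈ s := by
  induction s using Multiset.induction with
  | empty => left; simp
  | cons b s ih =>
    rw [sup_cons]
    rcases ih with h | h
    · rcases Nat.eq_zero_or_pos b with rfl | hb
      · rw [h]; left; simp
      · right; rw [h]
        have : b ⊔ 0 = b := by simp
        rw [this]; exact mem_cons_self _ _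
    · rcases le_total b s.sup with hle | hle
      · right; rw [sup_eq_right.2 hle]; exact mem_cons_of_mem h
      · right; rw [sup_eq_left.2 hle]; exact mem_cons_self _ _

lemma le_sup_iff_mcount {u : ℕ} (hu : 1 ≤ u) (s : Multiset ℕ) :
    u ≤ s.sup ↔ 1 ≤ mcount u s := by
  constructor
  · intro h
    rcases sup_attained (s := s) with h0 | hm
    · omega
    · rw [Nat.succ_le, mcount_pos_iff]
      exact ⟨s.sup, hm, h⟩
  · intro h
    rw [Nat.succ_le, mcount_pos_iff] at h
    obtain ⟨x, hx, hux⟩ := h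
    exact le_trans hux (le_sup hx)

lemma conj_card (s : Multiset ℕ) : (conj s).card = s.sup := by
  simp [conj]

lemma conj_pos {s : Multiset ℕ} : ∀ x ∈ conj s, 0 < x := by
  intro x hx
  obtain ⟨i, hi, rfl⟩ := mem_map.1 hx
  rw [Multiset.mem_range] at hi
  have : 1 ≤ mcount (i+1) s := by
    rw [← le_sup_iff_mcount (by omega)]
    omega
  omega

lemma conj_parts_le {s : Multiset ℕ} : ∀ x ∈ conj s, x ≤ s.card := by
  intro x hx
  obtain ⟨i, hi, rfl⟩ := mem_map.1 hx
  exact mcount_le_card _ _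

lemma conj_sum (s : Multiset ℕ) : (conj s).sum = s.sum := by
  rw [conj]
  rw [sum_eq_mcount_sum (N := s.sup) (fun x hx => le_sup hx)]
  rfl

lemma mcount_conj_iff {t u : ℕ} (ht : 1 ≤ t) (hu : 1 ≤ u) (s : Multiset ℕ) :
    u ≤ mcount t (conj s) ↔ t ≤ mcount u s := by
  have hrw : mcount t (conj s) = ((Finset.range s.sup).filter (fun i => t ≤ mcount (i+1) s)).card := by
    unfold mcount conj
    rw [Multiset.filter_map]
    rw [card_map]
    rfl
  rw [hrw]
  constructor
  · intro h
    by_contra hc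
    push_neg at hc
    have hsub : (Finset.range s.sup).filter (fun i => t ≤ mcount (i+1) s) ⊆ Finset.range (u-1) := by
      intro i hi
      simp only [Finset.mem_filter, Finset.mem_range] at *
      by_contra hlt
      have : u ≤ i + 1 := by omega
      have := le_trans hi.2 (mcount_anti this s)
      omega
    have := Finset.card_le_card hsub
    rw [Finset.card_range] at this
    omega
  · intro h
    have hsub : Finset.range u ⊆ (Finset.range s.sup).filter (fun i => t ≤ mcount (i+1) s) := by
      intro i hi
      simp only [Finset.mem_range] at hi
      have h1 : t ≤ mcount (i+1) s := le_trans h (mcount_anti (by omega) s)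
      have h2 : i < s.sup := by
        have : 1 ≤ mcount (i+1) s := by omega
        have := (le_sup_iff_mcount (u := i+1) (by omega) s).2 this
        omega
      simp only [Finset.mem_filter, Finset.mem_range]
      exact ⟨h2, h1⟩
    have := Finset.card_le_card hsub
    rw [Finset.card_range] at this
    omega

lemma mcount_conj_eq {t : ℕ} (ht : 1 ≤ t) {s s' : Multiset ℕ}
    (h : ∀ u, 1 ≤ u → (u ≤ mcount t s ↔ u ≤ mcount t s')) : mcount t s = mcount t s' := by
  have h1 := h (mcount t s)
  have h2 := h (mcount t s')
  omega

lemma conj_conj {s : Multiset ℕ} (hs : ∀ x ∈ s, 0 < x) : conj (conj s) = s := by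
  apply mcount_ext conj_pos hs
  intro t ht
  apply mcount_conj_eq ht
  intro u hu
  rw [mcount_conj_iff ht hu, mcount_conj_iff hu ht]


/-! ### The building map G and Durfee index -/

def G (c sz : ℕ) (a b : Multiset ℕ) : Multiset ℕ :=
  a.map (· + sz) + replicate (c - a.card) sz + conj b

lemma aux_mul {a c sz : ℕ} (h : a ≤ c) : a * sz + (c - a) * sz = c * sz := by
  rw [← Nat.add_mul]
  congr 1
  omega

lemma sum_map_add_const (a : Multiset ℕ) (sz : ℕ) :
    (a.map (· + sz)).sum = a.sum + a.card * sz := by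
  induction a using Multiset.induction with
  | empty => simp
  | cons x a ih =>
    simp only [map_cons, sum_cons, card_cons, ih]
    ring

lemma G_sum {c sz : ℕ} {a b : Multiset ℕ} (h : a.card ≤ c) (hb : ∀ x ∈ b, 0 < x) :
    (G c sz a b).sum = a.sum + c * sz + b.sum := by
  unfold G
  rw [sum_add, sum_add, sum_map_add_const, sum_replicate, conj_sum, smul_eq_mul]
  have := aux_mul (sz := sz) h
  omega

lemma G_pos {c sz : ℕ} {a b : Multiset ℕ} (hsz : 0 < sz) : ∀ x ∈ G c sz a b, 0 < x := by
  intro x hx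
  rcases mem_add.1 hx with hx | hx
  · rcases mem_add.1 hx with hx | hx
    · obtain ⟨y, _, rfl⟩ := mem_map.1 hx
      omega
    · rw [eq_of_mem_replicate hx]; exact hsz
  · exact conj_pos x hx

lemma mcount_G_le {t c sz : ℕ} {a b : Multiset ℕ} (h : t ≤ sz) (hac : a.card ≤ c) :
    mcount t (G c sz a b) = c + mcount t (conj b) := by
  unfold G
  rw [mcount_add, mcount_add, mcount_map_add_of_le a h, mcount_replicate, if_pos h]
  omega

lemma mcount_G_gt {t c sz : ℕ} {a b : Multiset ℕ} (h : sz < t) :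
    mcount t (G c sz a b) = mcount (t - sz) a + mcount t (conj b) := by
  unfold G
  rw [mcount_add, mcount_add, mcount_map_add a h, mcount_replicate, if_neg (by omega)]
  omega

lemma mcount_conj_zero {t : ℕ} {b : Multiset ℕ} (h : b.card < t) :
    mcount t (conj b) = 0 :=
  mcount_eq_zero_of_lt (fun x hx => lt_of_le_of_lt (conj_parts_le x hx) h)

def dur (J : ℕ) (s : Multiset ℕ) : ℕ := Nat.findGreatest (fun d => d ≤ mcount (d + J) s) s.card

lemma dur_spec {J d0 : ℕ} {s : Multiset ℕ} (h1 : d0 ≤ mcount (d0 + J) s)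
    (h2 : mcount (d0 + 1 + J) s ≤ d0) : dur J s = d0 := by
  have hd0 : d0 ≤ s.card := le_trans h1 (mcount_le_card _ _)
  unfold dur
  have hle : d0 ≤ Nat.findGreatest (fun d => d ≤ mcount (d + J) s) s.card :=
    Nat.le_findGreatest hd0 h1
  rcases Nat.lt_or_ge d0 (Nat.findGreatest (fun d => d ≤ mcount (d + J) s) s.card) with hlt | hge
  · exfalso
    have hspec : Nat.findGreatest (fun d => d ≤ mcount (d + J) s) s.card ≤
        mcount (Nat.findGreatest (fun d => d ≤ mcount (d + J) s) s.card + J) s :=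
      Nat.findGreatest_spec (P := fun d => d ≤ mcount (d + J) s) hd0 h1
    have : mcount (Nat.findGreatest (fun d => d ≤ mcount (d + J) s) s.card + J) s ≤
        mcount (d0 + 1 + J) s :=
      mcount_anti (by omega) s
    omega
  · omega

lemma dur_prop (J : ℕ) (s : Multiset ℕ) : dur J s ≤ mcount (dur J s + J) s := by
  unfold dur
  exact Nat.findGreatest_spec (P := fun d => d ≤ mcount (d + J) s) (m := 0)
    (Nat.zero_le _) (Nat.zero_le _)

lemma dur_succ (J : ℕ) (s : Multiset ℕ) : mcount (dur J s + 1 + J) s ≤ dur J s := by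
  rcases Nat.lt_or_ge s.card (dur J s + 1) with h | h
  · have hd : dur J s ≤ s.card := Nat.findGreatest_le _
    exact le_trans (mcount_le_card _ _) (by omega)
  · have := Nat.findGreatest_is_greatest (P := fun d => d ≤ mcount (d + J) s)
      (n := s.card) (k := dur J s + 1) (Nat.lt_succ_self _) h
    simp only [not_le] at this
    omega

/-- Durfee index of a family-A image is `d`, and the count is exactly `d`. -/
lemma mcount_A {j d : ℕ} {a b : Multiset ℕ} (ha : ∀ x ∈ a, 0 < x)
    (hac : a.card ≤ d) (hbc : b.card ≤ d + j) :
    mcount (d + (j+1)) (G d (d + j + 1) a b) = d ∧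
      mcount (d + 1 + (j+1)) (G d (d + j + 1) a b) ≤ d := by
  constructor
  · rw [show d + (j+1) = d + j + 1 by ring, mcount_G_le (le_refl _) hac,
      mcount_conj_zero (by omega)]
    omega
  · rw [show d + 1 + (j+1) = (d + j + 1) + 1 by ring, mcount_G_gt (by omega),
      mcount_conj_zero (by omega)]
    rw [show d + j + 1 + 1 - (d + j + 1) = 1 by omega, mcount_one ha]
    omega

lemma mcount_B {j e : ℕ} {a b : Multiset ℕ} (ha : ∀ x ∈ a, 0 < x)
    (hac : a.card ≤ e) (hbc : b.card ≤ e + j + 1) :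
    e + 1 ≤ mcount (e + (j+1)) (G (e+1) (e + j + 1) a b) ∧
      mcount (e + 1 + (j+1)) (G (e+1) (e + j + 1) a b) ≤ e := by
  constructor
  · rw [show e + (j+1) = e + j + 1 by ring, mcount_G_le (le_refl _) (by omega)]
    omega
  · rw [show e + 1 + (j+1) = (e + j + 1) + 1 by ring, mcount_G_gt (by omega),
      mcount_conj_zero (by omega)]
    rw [show e + j + 1 + 1 - (e + j + 1) = 1 by omega, mcount_one ha]
    omega

lemma dur_A {j d : ℕ} {a b : Multiset ℕ} (ha : ∀ x ∈ a, 0 < x)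
    (hac : a.card ≤ d) (hbc : b.card ≤ d + j) :
    dur (j+1) (G d (d + j + 1) a b) = d := by
  obtain ⟨h1, h2⟩ := mcount_A ha hac hbc
  exact dur_spec (by omega) h2

lemma dur_B {j e : ℕ} {a b : Multiset ℕ} (ha : ∀ x ∈ a, 0 < x)
    (hac : a.card ≤ e) (hbc : b.card ≤ e + j + 1) :
    dur (j+1) (G (e+1) (e + j + 1) a b) = e := by
  obtain ⟨h1, h2⟩ := mcount_B ha hac hbc
  exact dur_spec (by omega) h2

/-- recovery of the first multiset -/
lemma G_filter {c sz : ℕ} {a b : Multiset ℕ} (ha : ∀ x ∈ a, 0 < x)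
    (hb : ∀ x ∈ conj b, x ≤ sz) :
    (G c sz a b).filter (fun x => sz + 1 ≤ x) = a.map (· + sz) := by
  unfold G
  rw [filter_add, filter_add]
  rw [filter_eq_self.2 (fun x hx => by obtain ⟨y, hy, rfl⟩ := mem_map.1 hx; have := ha y hy; omega)]
  rw [filter_eq_nil.2 (fun x hx => by rw [eq_of_mem_replicate hx]; omega)]
  rw [filter_eq_nil.2 (fun x hx => by have := hb x hx; omega)]
  simp

lemma G_recover_a {c sz : ℕ} {a b : Multiset ℕ} (ha : ∀ x ∈ a, 0 < x)
    (hb : ∀ x ∈ conj b, x ≤ sz) :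
    ((G c sz a b).filter (fun x => sz + 1 ≤ x)).map (· - sz) = a := by
  rw [G_filter ha hb, Multiset.map_map]
  have : ∀ x ∈ a, ((· - sz) ∘ (· + sz)) x = id x := by
    intro x _
    simp
  rw [Multiset.map_congr rfl this, Multiset.map_id]

lemma G_inj {c sz : ℕ} {a b a' b' : Multiset ℕ} (ha : ∀ x ∈ a, 0 < x) (ha' : ∀ x ∈ a', 0 < x)
    (hb : ∀ x ∈ b, 0 < x) (hb' : ∀ x ∈ b', 0 < x)
    (hbs : ∀ x ∈ conj b, x ≤ sz) (hbs' : ∀ x ∈ conj b', x ≤ sz)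
    (h : G c sz a b = G c sz a' b') : a = a' ∧ b = b' := by
  have haa : a = a' := by
    rw [← G_recover_a (c := c) ha hbs, ← G_recover_a (c := c) ha' hbs', h]
  subst haa
  refine ⟨rfl, ?_⟩
  unfold G at h
  have hc : conj b = conj b' := by
    exact add_left_cancel h
  rw [← conj_conj hb, ← conj_conj hb', hc]


/-! ### The two families and the bijection -/

def Tri (j n : ℕ) : Type :=
  {t : ℕ × Multiset ℕ × Multiset ℕ //
    (∀ x ∈ t.2.1, 0 < x) ∧ (∀ x ∈ t.2.2, 0 < x) ∧
    Multiset.card t.2.1 ≤ t.1 ∧ Multiset.card t.2.2 ≤ t.1 + j ∧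
    (t.1 + 1) * (t.1 + j) + t.2.1.sum + t.2.2.sum = n}

def F (m j : ℕ) : Tri j (m + j) ⊕ Tri (j + 1) m → Nat.Partition m
  | Sum.inl ⟨(d, a, b), h⟩ =>
    { parts := G d (d + j + 1) a b
      parts_pos := fun hx => G_pos (by omega) _ hx
      parts_sum := by
        obtain ⟨h1, h2, h3, h4, h5⟩ := h
        replace h5 : (d + 1) * (d + j) + a.sum + b.sum = m + j := h5
        replace h3 : a.card ≤ d := h3
        replace h2 : ∀ x ∈ b, 0 < x := h2
        rw [G_sum h3 h2]
        have : (d + 1) * (d + j) = d * (d + j + 1) + j := by ring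
        omega }
  | Sum.inr ⟨(e, a, b), h⟩ =>
    { parts := G (e + 1) (e + j + 1) a b
      parts_pos := fun hx => G_pos (by omega) _ hx
      parts_sum := by
        obtain ⟨h1, h2, h3, h4, h5⟩ := h
        replace h5 : (e + 1) * (e + (j + 1)) + a.sum + b.sum = m := h5
        replace h3 : a.card ≤ e := h3
        replace h2 : ∀ x ∈ b, 0 < x := h2
        rw [G_sum (a := a) (c := e + 1) (by omega) h2]
        have : (e + 1) * (e + (j + 1)) = (e + 1) * (e + j + 1) := by ring
        omega }

lemma conj_le_of_card_le {b : Multiset ℕ} {k : ℕ} (h : b.card ≤ k) :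
    ∀ x ∈ conj b, x ≤ k := fun x hx => le_trans (conj_parts_le x hx) h

lemma F_inj (m j : ℕ) : Function.Injective (F m j) := by
  rintro (⟨⟨d, a, b⟩, h1, h2, h3, h4, h5⟩ | ⟨⟨d, a, b⟩, h1, h2, h3, h4, h5⟩)
    (⟨⟨d', a', b'⟩, h1', h2', h3', h4', h5'⟩ | ⟨⟨d', a', b'⟩, h1', h2', h3', h4', h5'⟩) h <;>
    have hp := congrArg Nat.Partition.parts h <;> simp only [F] at hp
  · -- inl inl
    replace hp : G d (d + j + 1) a b = G d' (d' + j + 1) a' b' := hp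
    replace h1 : ∀ x ∈ a, 0 < x := h1
    replace h2 : ∀ x ∈ b, 0 < x := h2
    replace h1' : ∀ x ∈ a', 0 < x := h1'
    replace h2' : ∀ x ∈ b', 0 < x := h2'
    replace h3 : a.card ≤ d := h3
    replace h4 : b.card ≤ d + j := h4
    replace h3' : a'.card ≤ d' := h3'
    replace h4' : b'.card ≤ d' + j := h4'
    have hd : d = d' := by
      have e1 := dur_A (j := j) h1 h3 h4
      have e2 := dur_A (j := j) h1' h3' h4'
      rw [hp] at e1
      omega
    subst hd
    obtain ⟨ha, hb⟩ := G_inj h1 h1' h2 h2'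
      (conj_le_of_card_le (b := b) (by omega)) (conj_le_of_card_le (b := b') (by omega)) hp
    subst ha; subst hb; rfl
  · -- inl inr : contradiction
    replace hp : G d (d + j + 1) a b = G (d' + 1) (d' + j + 1) a' b' := hp
    replace h1 : ∀ x ∈ a, 0 < x := h1
    replace h2 : ∀ x ∈ b, 0 < x := h2
    replace h1' : ∀ x ∈ a', 0 < x := h1'
    replace h2' : ∀ x ∈ b', 0 < x := h2'
    replace h3 : a.card ≤ d := h3
    replace h4 : b.card ≤ d + j := h4
    replace h3' : a'.card ≤ d' := h3'
    replace h4' : b'.card ≤ d' + (j + 1) := h4'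
    exfalso
    have e1 := dur_A (j := j) h1 h3 h4
    have e2 := dur_B (j := j) (b := b') h1' h3' (by omega)
    rw [hp] at e1
    have hd : d = d' := by omega
    subst hd
    have c1 := (mcount_A (j := j) (a := a) (b := b) h1 h3 h4).1
    have c2 := (mcount_B (j := j) (a := a') (b := b') h1' h3' (by omega)).1
    rw [hp] at c1
    omega
  · -- inr inl : contradiction
    replace hp : G (d + 1) (d + j + 1) a b = G d' (d' + j + 1) a' b' := hp
    replace h1 : ∀ x ∈ a, 0 < x := h1
    replace h2 : ∀ x ∈ b, 0 < x := h2
    replace h1' : ∀ x ∈ a', 0 < x := h1'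
    replace h2' : ∀ x ∈ b', 0 < x := h2'
    replace h3 : a.card ≤ d := h3
    replace h4 : b.card ≤ d + (j + 1) := h4
    replace h3' : a'.card ≤ d' := h3'
    replace h4' : b'.card ≤ d' + j := h4'
    exfalso
    have e1 := dur_B (j := j) (b := b) h1 h3 (by omega)
    have e2 := dur_A (j := j) h1' h3' h4'
    rw [hp] at e1
    have hd : d = d' := by omega
    subst hd
    have c1 := (mcount_B (j := j) (a := a) (b := b) h1 h3 (by omega)).1
    have c2 := (mcount_A (j := j) (a := a') (b := b') h1' h3' h4').1
    rw [hp] at c1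
    omega
  · -- inr inr
    replace hp : G (d + 1) (d + j + 1) a b = G (d' + 1) (d' + j + 1) a' b' := hp
    replace h1 : ∀ x ∈ a, 0 < x := h1
    replace h2 : ∀ x ∈ b, 0 < x := h2
    replace h1' : ∀ x ∈ a', 0 < x := h1'
    replace h2' : ∀ x ∈ b', 0 < x := h2'
    replace h3 : a.card ≤ d := h3
    replace h4 : b.card ≤ d + (j + 1) := h4
    replace h3' : a'.card ≤ d' := h3'
    replace h4' : b'.card ≤ d' + (j + 1) := h4'
    have hd : d = d' := by
      have e1 := dur_B (j := j) (b := b) h1 h3 (by omega)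
      have e2 := dur_B (j := j) (b := b') h1' h3' (by omega)
      rw [hp] at e1
      omega
    subst hd
    obtain ⟨ha, hb⟩ := G_inj h1 h1' h2 h2'
      (conj_le_of_card_le (b := b) (by omega)) (conj_le_of_card_le (b := b') (by omega)) hp
    subst ha; subst hb; rfl


lemma F_surj (m j : ℕ) : Function.Surjective (F m j) := by
  intro p
  have hpos : ∀ x ∈ p.parts, 0 < x := fun x hx => p.parts_pos hx
  have hsum : p.parts.sum = m := p.parts_sum
  set lam := p.parts with hlam
  set d := dur (j + 1) lam with hddef
  set sz := d + j + 1 with hsz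
  have hd1 : d ≤ mcount sz lam := by
    have := dur_prop (j + 1) lam
    rwa [show d + (j + 1) = sz by omega] at this
  have hd2 : mcount (sz + 1) lam ≤ d := by
    have := dur_succ (j + 1) lam
    rwa [show d + 1 + (j + 1) = sz + 1 by omega] at this
  set top := lam.filter (fun x => sz + 1 ≤ x) with htop
  set rest := lam.filter (fun x => ¬ (sz + 1 ≤ x)) with hrest
  have hsplit : top + rest = lam := filter_add_not _ _
  set a := top.map (· - sz) with ha
  have hamap : a.map (· + sz) = top := by
    rw [ha, Multiset.map_map]
    rw [Multiset.map_congr rfl (fun x hx => ?_), Multiset.map_id]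
    rw [htop] at hx
    have := (mem_filter.1 hx).2
    simp only [Function.comp_apply, id_eq]
    omega
  have hacard : a.card = mcount (sz + 1) lam := by
    rw [ha, card_map, htop]; rfl
  have hapos : ∀ x ∈ a, 0 < x := by
    intro x hx
    rw [ha] at hx
    obtain ⟨y, hy, rfl⟩ := mem_map.1 hx
    rw [htop] at hy
    have := (mem_filter.1 hy).2
    omega
  set mid := rest.filter (fun x => sz ≤ x) with hmid
  set bot := rest.filter (fun x => ¬ (sz ≤ x)) with hbot
  have hsplit2 : mid + bot = rest := filter_add_not _ _
  have hbotlt : ∀ x ∈ bot, x < sz := by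
    intro x hx
    rw [hbot] at hx
    have := (mem_filter.1 hx).2
    omega
  have hbotpos : ∀ x ∈ bot, 0 < x := by
    intro x hx
    rw [hbot] at hx
    have h1 := mem_of_mem_filter hx
    rw [hrest] at h1
    exact hpos x (mem_of_mem_filter h1)
  have htopcount : mcount sz top = top.card := by
    unfold mcount
    rw [show top.filter (fun x => sz ≤ x) = top from filter_eq_self.2 (fun x hx => by
      rw [htop] at hx
      have := (mem_filter.1 hx).2
      omega)]
  have htopcard : top.card = mcount (sz + 1) lam := by rw [htop]; rfl
  have hmcadd : mcount sz lam = mcount sz top + mcount sz rest := by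
    conv_lhs => rw [← hsplit]
    rw [mcount_add]
  have hmidcard : mid.card = mcount sz rest := by rw [hmid]; rfl
  have hmidrep : mid = replicate (mcount sz lam - mcount (sz + 1) lam) sz := by
    rw [eq_replicate]
    constructor
    · omega
    · intro b hb
      rw [hmid] at hb
      have h1 := (mem_filter.1 hb).2
      have h2 := mem_of_mem_filter hb
      rw [hrest] at h2
      have h3 := (mem_filter.1 h2).2
      omega
  have e1 : lam.sum = top.sum + rest.sum := by
    conv_lhs => rw [← hsplit]
    rw [sum_add]
  have e2 : rest.sum = mid.sum + bot.sum := by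
    conv_lhs => rw [← hsplit2]
    rw [sum_add]
  have htopsum : top.sum = a.sum + a.card * sz := by
    rw [← hamap, sum_map_add_const, card_map]
  have hmidsum : mid.sum = (mcount sz lam - mcount (sz + 1) lam) * sz := by
    rw [hmidrep, sum_replicate, smul_eq_mul]
  by_cases hcase : d + 1 ≤ mcount sz lam
  · -- family B
    set r := mcount sz lam - (d + 1) with hrdef
    set bot' := replicate r sz + bot with hbot'
    have hbotpos' : ∀ x ∈ bot', 0 < x := by
      intro x hx
      rw [hbot'] at hx
      rcases mem_add.1 hx with hx | hx
      · rw [eq_of_mem_replicate hx]; omega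
      · exact hbotpos x hx
    have hbotle' : ∀ x ∈ bot', x ≤ sz := by
      intro x hx
      rw [hbot'] at hx
      rcases mem_add.1 hx with hx | hx
      · rw [eq_of_mem_replicate hx]
      · exact le_of_lt (hbotlt x hx)
    have hbsum' : bot'.sum = r * sz + bot.sum := by
      rw [hbot', sum_add, sum_replicate, smul_eq_mul]
    refine ⟨Sum.inr ⟨(d, a, conj bot'), hapos, conj_pos, ?_, ?_, ?_⟩, ?_⟩
    · show a.card ≤ d
      omega
    · show (conj bot').card ≤ d + (j + 1)
      rw [conj_card]
      exact le_trans (Multiset.sup_le.2 hbotle') (by omega)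
    · show (d + 1) * (d + (j + 1)) + a.sum + (conj bot').sum = m
      rw [conj_sum]
      have hring : (d + 1) * (d + (j + 1)) = (d + 1) * sz := by rw [hsz]; ring
      have haux : a.card * sz + (d + 1 - a.card) * sz = (d + 1) * sz :=
        aux_mul (by omega)
      have haux2 : (d + 1 - a.card) * sz + r * sz = (mcount sz lam - a.card) * sz := by
        rw [← Nat.add_mul]
        congr 1
        omega
      have hms : mid.sum = (mcount sz lam - a.card) * sz := by rw [hmidsum, hacard]
      omega
    · apply Nat.Partition.ext
      show G (d + 1) sz a (conj bot') = lam
      unfold G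
      rw [conj_conj hbotpos']
      have hrep : replicate (d + 1 - a.card) sz + replicate r sz =
          replicate (mcount sz lam - mcount (sz + 1) lam) sz := by
        rw [← replicate_add]
        congr 1
        omega
      rw [hbot', ← add_assoc, add_assoc (a.map (· + sz)), hrep, ← hmidrep, hamap]
      rw [add_assoc, hsplit2, hsplit]
  · -- family A
    have hM : mcount sz lam = d := by omega
    refine ⟨Sum.inl ⟨(d, a, conj bot), hapos, conj_pos, ?_, ?_, ?_⟩, ?_⟩
    · show a.card ≤ d
      omega
    · show (conj bot).card ≤ d + j
      rw [conj_card]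
      apply Multiset.sup_le.2
      intro x hx
      have := hbotlt x hx
      omega
    · show (d + 1) * (d + j) + a.sum + (conj bot).sum = m + j
      rw [conj_sum]
      have hring : (d + 1) * (d + j) = d * sz + j := by rw [hsz]; ring
      have haux : a.card * sz + (d - a.card) * sz = d * sz := aux_mul (by omega)
      have hms : mid.sum = (d - a.card) * sz := by
        rw [hmidsum, hacard]
        congr 1
        omega
      omega
    · apply Nat.Partition.ext
      show G d sz a (conj bot) = lam
      unfold G
      rw [conj_conj hbotpos]
      have hrep : replicate (d - a.card) sz =
          replicate (mcount sz lam - mcount (sz + 1) lam) sz := by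
        congr 1
        omega
      rw [hrep, ← hmidrep, hamap, add_assoc, hsplit2, hsplit]

theorem key (m j : ℕ) :
    Nat.card (Nat.Partition m) = Nat.card (Tri j (m + j)) + Nat.card (Tri (j + 1) m) := by
  have hbij : Function.Bijective (F m j) := ⟨F_inj m j, F_surj m j⟩
  have hfin : Finite (Tri j (m + j) ⊕ Tri (j + 1) m) := Finite.of_injective _ hbij.1
  have h1 : Finite (Tri j (m + j)) := Finite.sum_left (Tri (j + 1) m)
  have h2 : Finite (Tri (j + 1) m) := Finite.sum_right (Tri j (m + j))
  rw [← Nat.card_eq_of_bijective _ hbij, Nat.card_sum]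


/-! ### The alternating sum -/

noncomputable def S (j n : ℕ) : ℤ :=
  ∑ k ∈ Finset.range (n + 1),
    (-1) ^ k * pZ ((n : ℤ) - (k * (k + 1) / 2 : ℕ) - (j * (k + 1) : ℕ))

lemma pZ_natCast (m : ℕ) : pZ (m : ℤ) = (Nat.card (Nat.Partition m) : ℤ) := by
  rw [pZ, if_pos (by positivity), Int.toNat_natCast]

lemma tri_dvd (i : ℕ) : 2 * (i * (i + 1) / 2) = i * (i + 1) :=
  Nat.mul_div_cancel' (Nat.even_mul_succ_self i).two_dvd

lemma term_eq_zero {m j' k : ℕ} (h : m < k * (k + 1) / 2 + j' * (k + 1)) :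
    pZ ((m : ℤ) - (k * (k + 1) / 2 : ℕ) - (j' * (k + 1) : ℕ)) = 0 := by
  rw [pZ, if_neg]
  have : (m : ℤ) < (k * (k + 1) / 2 : ℕ) + (j' * (k + 1) : ℕ) := by exact_mod_cast h
  omega

lemma sum_ext (m j' : ℕ) (hj : 1 ≤ j') {X N : ℕ} (hm : m ≤ X) (hXN : X ≤ N) :
    ∑ k ∈ Finset.range X, (-1 : ℤ) ^ k * pZ ((m : ℤ) - (k * (k + 1) / 2 : ℕ) - (j' * (k + 1) : ℕ)) =
    ∑ k ∈ Finset.range N, (-1 : ℤ) ^ k * pZ ((m : ℤ) - (k * (k + 1) / 2 : ℕ) - (j' * (k + 1) : ℕ)) := by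
  apply Finset.sum_subset (Finset.range_subset_range.2 hXN)
  intro k hk hnk
  simp only [Finset.mem_range, not_lt] at hk hnk
  rw [term_eq_zero, mul_zero]
  have h1 : k + 1 ≤ j' * (k + 1) := Nat.le_mul_of_pos_left _ hj
  omega

lemma S_eq_sum (j' m : ℕ) (hj : 1 ≤ j') {N : ℕ} (hN : m + 1 ≤ N) :
    S j' m = ∑ k ∈ Finset.range N,
      (-1 : ℤ) ^ k * pZ ((m : ℤ) - (k * (k + 1) / 2 : ℕ) - (j' * (k + 1) : ℕ)) :=
  sum_ext m j' hj (by omega) hN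

lemma S_rec (n j : ℕ) (h : j ≤ n) :
    S j n = (Nat.card (Nat.Partition (n - j)) : ℤ) - S (j + 1) (n - j) := by
  rw [S, Finset.sum_range_succ']
  have hf0 : (-1 : ℤ) ^ 0 * pZ ((n : ℤ) - (0 * (0 + 1) / 2 : ℕ) - (j * (0 + 1) : ℕ)) =
      (Nat.card (Nat.Partition (n - j)) : ℤ) := by
    rw [pow_zero, one_mul,
      show ((n : ℤ) - (0 * (0 + 1) / 2 : ℕ) - (j * (0 + 1) : ℕ)) = ((n - j : ℕ) : ℤ) by
        push_cast [h]; ring_nf,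
      pZ_natCast]
  rw [hf0]
  have hterm : ∀ i ∈ Finset.range n,
      (-1 : ℤ) ^ (i + 1) * pZ ((n : ℤ) - ((i+1) * ((i+1) + 1) / 2 : ℕ) - (j * ((i+1) + 1) : ℕ)) =
      -((-1 : ℤ) ^ i * pZ (((n - j : ℕ) : ℤ) - (i * (i + 1) / 2 : ℕ) - ((j+1) * (i + 1) : ℕ))) := by
    intro i _
    have hd := tri_dvd i
    have hr : (i + 1) * ((i + 1) + 1) = i * (i + 1) + 2 * (i + 1) := by ring
    have hT : (i + 1) * ((i + 1) + 1) / 2 = i * (i + 1) / 2 + (i + 1) := by omega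
    rw [hT, pow_succ]
    have harg : ((n : ℤ) - (i * (i + 1) / 2 + (i + 1) : ℕ) - (j * ((i+1) + 1) : ℕ)) =
        (((n - j : ℕ) : ℤ) - (i * (i + 1) / 2 : ℕ) - ((j+1) * (i + 1) : ℕ)) := by
      push_cast [h]
      ring
    rw [harg]
    ring
  rw [Finset.sum_congr rfl hterm, Finset.sum_neg_distrib]
  rw [sum_ext (n - j) (j + 1) (by omega) (X := n) (N := n + 1) (by omega) (by omega)]
  rw [← S_eq_sum (j + 1) (n - j) (by omega) (by omega : (n - j) + 1 ≤ n + 1)]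
  ring

lemma S_zero_of_lt {n j : ℕ} (h : n < j) : S j n = 0 := by
  rw [S]
  apply Finset.sum_eq_zero
  intro k _
  rw [term_eq_zero, mul_zero]
  have h1 : j ≤ j * (k + 1) := Nat.le_mul_of_pos_right _ (by omega)
  omega

lemma tri_card_zero {n j : ℕ} (h : n < j) : Nat.card (Tri j n) = 0 := by
  have : IsEmpty (Tri j n) := by
    constructor
    rintro ⟨⟨d, a, b⟩, h1, h2, h3, h4, h5⟩
    replace h5 : (d + 1) * (d + j) + a.sum + b.sum = n := h5
    have hj : j ≤ (d + 1) * (d + j) :=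
      le_trans (Nat.le_add_left j d) (Nat.le_mul_of_pos_left _ (by omega))
    omega
  exact Nat.card_of_isEmpty

lemma main_ge1 : ∀ n j : ℕ, 1 ≤ j → S j n = (Nat.card (Tri j n) : ℤ) := by
  intro n
  induction n using Nat.strong_induction_on with
  | _ n ih =>
    intro j hj
    rcases Nat.lt_or_ge n j with hlt | hge
    · rw [S_zero_of_lt hlt, tri_card_zero hlt]
      simp
    · rw [S_rec n j hge]
      have hih := ih (n - j) (by omega) (j + 1) (by omega)
      rw [hih]
      have hkey := key (n - j) j
      rw [show (n - j) + j = n by omega] at hkey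
      rw [hkey]
      push_cast
      ring

lemma main_all (n j : ℕ) : S j n = (Nat.card (Tri j n) : ℤ) := by
  rcases Nat.eq_zero_or_pos j with rfl | hj
  · have h0 : (0 : ℕ) ≤ n := Nat.zero_le n
    rw [S_rec n 0 h0, Nat.sub_zero, main_ge1 n 1 (le_refl 1)]
    have hkey := key n 0
    rw [Nat.add_zero] at hkey
    rw [hkey]
    push_cast
    ring
  · exact main_ge1 n j hj

end Stmt4


/-- The alternating sum `∑_{k ≥ 0} (-1)^k p(n - k(k+1)/2 - j(k+1))` (all terms with
`k > n` vanish) equals the number of triples `(d, α, β)` where `α` is a partition with at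
most `d` parts, `β` is a partition with at most `d + j` parts, and
`(d+1)(d+j) + |α| + |β| = n`.  A partition of unrestricted weight is represented by its
multiset of (positive) parts. -/
theorem stmt_4 (n j : ℕ) :
    (∑ k ∈ Finset.range (n + 1),
        (-1) ^ k * pZ ((n : ℤ) - (k * (k + 1) / 2 : ℕ) - (j * (k + 1) : ℕ))) =
      (Nat.card {t : ℕ × Multiset ℕ × Multiset ℕ //
        (∀ x ∈ t.2.1, 0 < x) ∧ (∀ x ∈ t.2.2, 0 < x) ∧
        Multiset.card t.2.1 ≤ t.1 ∧ Multiset.card t.2.2 ≤ t.1 + j ∧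
        (t.1 + 1) * (t.1 + j) + t.2.1.sum + t.2.2.sum = n} : ℤ) :=
  Stmt4.main_all n j
end

section
/- For every integer n ≥ 0, the number of partitions of n whose mex is congruent to 1 modulo 4 equals ∑_{k≥0} ( p(n − 2k(4k+1)) − p(n − 2k(4k+1) − (4k+1)) ), where p(m) = 0 for m < 0. -/
/-- The mex of a partition: the smallest positive integer that is not a part. -/
noncomputable def partMex {n : ℕ} (P : Nat.Partition n) : ℕ :=
  sInf {k : ℕ | 0 < k ∧ k ∉ P.parts}

open Finset in
lemma mexSet_nonempty {n : ℕ} (P : Nat.Partition n) :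
    (n + 1) ∈ {k : ℕ | 0 < k ∧ k ∉ P.parts} := by
  refine ⟨Nat.succ_pos n, fun h => ?_⟩
  have := Multiset.single_le_sum (fun x _ => Nat.zero_le x) _ h
  rw [P.parts_sum] at this
  omega

lemma partMex_le {n : ℕ} (P : Nat.Partition n) : partMex P ≤ n + 1 :=
  Nat.sInf_le (mexSet_nonempty P)

lemma le_partMex_iff {n : ℕ} (P : Nat.Partition n) (m : ℕ) :
    m ≤ partMex P ↔ ∀ i, 0 < i → i < m → i ∈ P.parts := by
  constructor
  · intro h i hi him
    by_contra hmem
    have := Nat.sInf_le (s := {k : ℕ | 0 < k ∧ k ∉ P.parts}) ⟨hi, hmem⟩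
    unfold partMex at h; omega
  · intro h
    by_contra hlt
    push_neg at hlt
    have hmem := Nat.sInf_mem ⟨n+1, mexSet_nonempty P⟩
    exact hmem.2 (h _ hmem.1 hlt)

/-- Removing one copy of each required part gives an equivalence. -/
noncomputable def partEquiv (n : ℕ) (s : Multiset ℕ) (hpos : ∀ i ∈ s, 0 < i)
    (hle : s.sum ≤ n) :
    {P : Nat.Partition n // s ≤ P.parts} ≃ Nat.Partition (n - s.sum) where
  toFun := fun ⟨P, hP⟩ =>
    ⟨P.parts - s,
     fun {i} hi => P.parts_pos (Multiset.mem_of_le (Multiset.sub_le_self _ _) hi),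
     by
       have h1 : (P.parts - s) + s = P.parts := tsub_add_cancel_of_le hP
       have h2 := congrArg Multiset.sum h1
       rw [Multiset.sum_add, P.parts_sum] at h2
       omega⟩
  invFun := fun Q =>
    ⟨⟨Q.parts + s,
      fun {i} hi => by
        rcases Multiset.mem_add.1 hi with h | h
        · exact Q.parts_pos h
        · exact hpos i h,
      by rw [Multiset.sum_add, Q.parts_sum]; omega⟩,
     Multiset.le_add_left _ _⟩
  left_inv := fun ⟨P, hP⟩ =>
    Subtype.ext (Nat.Partition.ext (tsub_add_cancel_of_le hP))
  right_inv := fun Q => Nat.Partition.ext (by simp)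

lemma le_parts_iff {n : ℕ} (P : Nat.Partition n) (m : ℕ) :
    (Finset.Ico 1 m).val ≤ P.parts ↔ ∀ i, 0 < i → i < m → i ∈ P.parts := by
  rw [Multiset.le_iff_count]
  constructor
  · intro h i hi him
    have hc := h i
    rw [Multiset.count_eq_one_of_mem (Finset.Ico 1 m).nodup
      (by rw [Finset.mem_val, Finset.mem_Ico]; omega)] at hc
    exact Multiset.one_le_count_iff_mem.1 hc
  · intro h a
    by_cases ha : a ∈ (Finset.Ico 1 m).val
    · rw [Multiset.count_eq_one_of_mem (Finset.Ico 1 m).nodup ha]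
      rw [Finset.mem_val, Finset.mem_Ico] at ha
      exact Multiset.one_le_count_iff_mem.2 (h a (by omega) (by omega))
    · rw [Multiset.count_eq_zero_of_notMem ha]
      exact Nat.zero_le _

lemma Ico_val_sum (m : ℕ) : (Finset.Ico 1 m).val.sum = ∑ i ∈ Finset.Ico 1 m, i := by
  show _ = (Multiset.map (fun i => i) (Finset.Ico 1 m).val).sum
  rw [Multiset.map_id']

lemma card_mex_ge {n : ℕ} (m : ℕ) :
    (Nat.card {P : Nat.Partition n // m ≤ partMex P} : ℤ)
      = pZ ((n : ℤ) - (∑ i ∈ Finset.Ico 1 m, i : ℕ)) := by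
  set T : ℕ := ∑ i ∈ Finset.Ico 1 m, i with hT
  have hpos : ∀ i ∈ (Finset.Ico 1 m).val, 0 < i := by
    intro i hi; rw [Finset.mem_val, Finset.mem_Ico] at hi; omega
  by_cases h : T ≤ n
  · have e1 : {P : Nat.Partition n // m ≤ partMex P}
        ≃ {P : Nat.Partition n // (Finset.Ico 1 m).val ≤ P.parts} :=
      Equiv.subtypeEquivRight (fun P => by rw [le_partMex_iff, le_parts_iff])
    have e2 := partEquiv n (Finset.Ico 1 m).val hpos (by rw [Ico_val_sum]; exact h)
    rw [Nat.card_congr (e1.trans e2), pZ, if_pos (by push_cast; omega)]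
    rw [Int.toNat_sub', Int.toNat_natCast, Ico_val_sum]
  · have : IsEmpty {P : Nat.Partition n // m ≤ partMex P} := by
      refine ⟨fun ⟨P, hP⟩ => ?_⟩
      have hs : (Finset.Ico 1 m).val ≤ P.parts :=
        (le_parts_iff P m).2 ((le_partMex_iff P m).1 hP)
      have h1 := congrArg Multiset.sum (tsub_add_cancel_of_le hs)
      rw [Multiset.sum_add, P.parts_sum, Ico_val_sum] at h1
      omega
    rw [Nat.card_of_isEmpty, pZ, if_neg (by push_cast; omega)]
    simp

lemma sum_Ico_one (m : ℕ) : (∑ i ∈ Finset.Ico 1 m, i) * 2 = m * (m - 1) := by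
  have h : ∑ i ∈ Finset.Ico 1 m, i = ∑ i ∈ Finset.range m, i := by
    rcases Nat.eq_zero_or_pos m with h | h
    · subst h; rfl
    · rw [Finset.range_eq_Ico, Finset.sum_eq_sum_Ico_succ_bot h]
      norm_num
  rw [h, Finset.sum_range_id_mul_two]

lemma card_mex_eq_split {n : ℕ} (m : ℕ) :
    Nat.card {P : Nat.Partition n // m ≤ partMex P}
      = Nat.card {P : Nat.Partition n // partMex P = m}
        + Nat.card {P : Nat.Partition n // m + 1 ≤ partMex P} := by
  classical
  simp only [Nat.card_eq_fintype_card, Fintype.card_subtype]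
  rw [← Finset.card_union_of_disjoint]
  · congr 1
    ext P
    simp only [Finset.mem_union, Finset.mem_filter, Finset.mem_univ, true_and]
    omega
  · rw [Finset.disjoint_left]
    intro P h1 h2
    simp only [Finset.mem_filter, Finset.mem_univ, true_and] at h1 h2
    omega

/-- The number of partitions of `n` with mex congruent to `1` modulo `4` equals
`∑_{k ≥ 0} (p(n - 2k(4k+1)) - p(n - 2k(4k+1) - (4k+1)))`; all terms with `k > n`
vanish. -/
theorem stmt_6 (n : ℕ) :
    (Nat.card {P : Nat.Partition n // partMex P % 4 = 1} : ℤ) =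
      ∑ k ∈ Finset.range (n + 1),
        (pZ ((n : ℤ) - (2 * k * (4 * k + 1) : ℕ)) -
          pZ ((n : ℤ) - (2 * k * (4 * k + 1) : ℕ) - (4 * k + 1 : ℕ))) := by
  classical
  have hcard : Nat.card {P : Nat.Partition n // partMex P % 4 = 1}
      = ∑ k ∈ Finset.range (n + 1),
          Nat.card {P : Nat.Partition n // partMex P = 4 * k + 1} := by
    rw [Nat.card_eq_fintype_card, Fintype.card_subtype]
    have hset : Finset.univ.filter (fun P : Nat.Partition n => partMex P % 4 = 1)
        = (Finset.range (n + 1)).biUnion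
            (fun k => Finset.univ.filter (fun P => partMex P = 4 * k + 1)) := by
      ext P
      simp only [Finset.mem_filter, Finset.mem_biUnion, Finset.mem_range,
        Finset.mem_univ, true_and]
      constructor
      · intro h
        have hle := partMex_le P
        exact ⟨partMex P / 4, by omega, by omega⟩
      · rintro ⟨k, _, hk⟩; omega
    rw [hset, Finset.card_biUnion]
    · refine Finset.sum_congr rfl fun k _ => ?_
      rw [Nat.card_eq_fintype_card, Fintype.card_subtype]
    · intro a _ b _ hab
      rw [Function.onFun, Finset.disjoint_left]
      intro P h1 h2
      simp only [Finset.mem_filter, Finset.mem_univ, true_and] at h1 h2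
      omega
  rw [hcard, Nat.cast_sum]
  refine Finset.sum_congr rfl fun k _ => ?_
  have hs := card_mex_eq_split (n := n) (4 * k + 1)
  simp only [show 4 * k + 1 + 1 = 4 * k + 2 by omega] at hs
  have h1 := card_mex_ge (n := n) (4 * k + 1)
  have h2 := card_mex_ge (n := n) (4 * k + 2)
  have hT1 : ∑ i ∈ Finset.Ico 1 (4 * k + 1), i = 2 * k * (4 * k + 1) := by
    have := sum_Ico_one (4 * k + 1)
    have h2' : (2 * k * (4 * k + 1)) * 2 = (4 * k + 1) * (4 * k + 1 - 1) := by
      have e : 4 * k + 1 - 1 = 4 * k := by omega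
      rw [e]; ring
    omega
  have hT2 : ∑ i ∈ Finset.Ico 1 (4 * k + 2), i = 2 * k * (4 * k + 1) + (4 * k + 1) := by
    have := sum_Ico_one (4 * k + 2)
    have h2' : (2 * k * (4 * k + 1) + (4 * k + 1)) * 2 = (4 * k + 2) * (4 * k + 2 - 1) := by
      have e : 4 * k + 2 - 1 = 4 * k + 1 := by omega
      rw [e]; ring
    omega
  rw [hT1] at h1
  rw [hT2] at h2
  have harg : (n : ℤ) - (↑(2 * k * (4 * k + 1) + (4 * k + 1)) : ℕ)
      = (n : ℤ) - (2 * k * (4 * k + 1) : ℕ) - (4 * k + 1 : ℕ) := by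
    push_cast; ring
  rw [harg] at h2
  omega
end
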